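/- arXiv:math/0602606 — 6 statements merged into one kernel-verified Lean document; each statement's English description precedes it below -/
import Mathlib

section
/- Let o be a complete noetherian local ring with maximal ideal m and residue field k, and let R be a local o-algebra whose structure homomorphism o → R is local and which is finitely generated as an o-module. Let M be a finitely generated R-module which is flat as an o-module. If M ⊗_o k is a free module over R ⊗_o k, then M is a free R-module; if moreover M ≠ 0, then R is flat as an o-module. -/
open IsLocalRing Function
open scoped TensorProduct

/-! Write `I = 𝔪R` and lift a basis `b` of `M/IM` over `R/I` to `v : ι → M`. By Nakayama the map
`f : Rᶥ → M, c ↦ ∑ cᵢ vᵢ` is onto, and its kernel `K` lies in `IRᶥ` since the `b i` are linearly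
independent. Flatness of `M` over `o` (the vanishing of `Tor₁(o/𝔪, M)`) gives `K ∩ IRᶥ = IK`, so
`K = IK`, and `K = 0` by Nakayama again since `R` is noetherian. Finally a nonzero free
`R`-module that is flat over `o` has `R` as an `o`-direct summand. -/

section Flat

variable {A : Type*} [CommRing A]

theorem TensorProduct.lid_rTensor_subtype_lTensor {X Y : Type*} [AddCommGroup X] [Module A X]
    [AddCommGroup Y] [Module A Y] (I : Ideal A) (g : X →ₗ[A] Y) (t : I ⊗[A] X) :
    TensorProduct.lid A Y (I.subtype.rTensor Y (g.lTensor I t)) =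
      g (TensorProduct.lid A X (I.subtype.rTensor X t)) := by
  induction t using TensorProduct.induction_on with
  | zero => simp
  | tmul a x => simp
  | add t₁ t₂ h₁ h₂ => simp only [map_add, h₁, h₂]

variable {N M : Type*} [AddCommGroup N] [Module A N] [AddCommGroup M] [Module A M]

theorem Module.Flat.ker_inf_smul_top_le_smul_ker [Module.Flat A M] (I : Ideal A)
    {f : N →ₗ[A] M} (hf : Surjective f) :
    LinearMap.ker f ⊓ I • ⊤ ≤ I • LinearMap.ker f := by
  rintro x ⟨hx, hxI⟩
  rw [← Ideal.subtype_rTensor_range] at hxI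
  obtain ⟨t, rfl⟩ := hxI
  -- `I ⊗ M → M` is injective by flatness, and `I ⊗ -` is right exact.
  have hμ_inj : Function.Injective ((TensorProduct.lid A M).comp (I.subtype.rTensor M)) :=
    (TensorProduct.lid A M).injective.comp
      (rTensor_preserves_injective_linearMap _ I.injective_subtype)
  have ht : f.lTensor I t = 0 := hμ_inj <| by
    simpa [TensorProduct.lid_rTensor_subtype_lTensor] using hx
  obtain ⟨u, rfl⟩ := (_root_.lTensor_exact I f.exact_subtype_ker_map hf t).mp ht
  have hu : TensorProduct.lid A _ (I.subtype.rTensor _ u) ∈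
      I • (⊤ : Submodule A (LinearMap.ker f)) := by
    rw [← Ideal.subtype_rTensor_range]
    exact ⟨u, rfl⟩
  simpa [TensorProduct.lid_rTensor_subtype_lTensor] using (Submodule.mem_smul_top_iff I _ _).mp hu

theorem Module.Flat.of_flat_pi {ι : Type*} {N : ι → Type*} [∀ i, AddCommGroup (N i)]
    [∀ i, Module A (N i)] [Module.Flat A (∀ i, N i)] (i : ι) : Module.Flat A (N i) := by
  classical
  exact of_retract (LinearMap.single A N i) (LinearMap.proj i) (by ext; simp)

end Flat

theorem Module.Flat.ker_inf_map_smul_top_le_map_smul_ker {A R N M : Type*} [CommRing A]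
    [CommRing R] [Algebra A R] [AddCommGroup N] [Module A N] [Module R N] [IsScalarTower A R N]
    [AddCommGroup M] [Module A M] [Module R M] [IsScalarTower A R M] [Module.Flat A M]
    (I : Ideal A) {f : N →ₗ[R] M} (hf : Surjective f) :
    LinearMap.ker f ⊓ I.map (algebraMap A R) • ⊤ ≤
      I.map (algebraMap A R) • LinearMap.ker f := by
  rw [← Submodule.restrictScalars_le A, Submodule.restrictScalars_inf,
    Submodule.restrictScalars_map_smul_eq, Submodule.restrictScalars_map_smul_eq]
  exact Module.Flat.ker_inf_smul_top_le_smul_ker I (f := f.restrictScalars A) hf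

section LiftingBasis

variable {R M : Type*} [CommRing R] [AddCommGroup M] [Module R M]

theorem LinearMap.surjective_of_surjective_mkQ_comp [Module.Finite R M] {N : Type*}
    [AddCommGroup N] [Module R N] {I : Ideal R} (hI : I ≤ Ideal.jacobson ⊥) (f : N →ₗ[R] M)
    (hf : Surjective ((I • ⊤ : Submodule R M).mkQ ∘ₗ f)) : Surjective f := by
  rw [← range_eq_top, range_comp, Submodule.map_mkQ_eq_top] at hf
  rw [← range_eq_top, eq_top_iff]
  exact Submodule.le_of_le_smul_of_le_jacobson_bot Module.Finite.fg_top hI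
    (by rw [sup_comm, hf])

theorem Submodule.mem_smul_top_of_forall_apply_mem {ι : Type*} [Finite ι] {I : Ideal R}
    {c : ι → R} (hc : ∀ i, c i ∈ I) : c ∈ I • (⊤ : Submodule R (ι → R)) := by
  classical
  have := Fintype.ofFinite ι
  rw [pi_eq_sum_univ c]
  exact sum_mem fun i _ => smul_mem_smul (hc i) trivial

namespace Module.Basis

variable {ι : Type*} [Fintype ι] {I : Ideal R}

theorem mk_linearCombination_eq_equivFun_symm
    (b : Basis ι (R ⧸ I) (M ⧸ I • (⊤ : Submodule R M)))
    {v : ι → M} (hv : ∀ i, Submodule.Quotient.mk (v i) = b i) (c : ι → R) :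
    Submodule.Quotient.mk (Fintype.linearCombination R v c) =
      b.equivFun.symm (Ideal.Quotient.mk I ∘ c) := by
  simp [Fintype.linearCombination_apply, equivFun_symm_apply, ← hv, ← Submodule.mkQ_apply]

theorem surjective_mkQ_comp_linearCombination
    (b : Basis ι (R ⧸ I) (M ⧸ I • (⊤ : Submodule R M)))
    {v : ι → M} (hv : ∀ i, Submodule.Quotient.mk (v i) = b i) :
    Surjective ((I • ⊤ : Submodule R M).mkQ ∘ₗ Fintype.linearCombination R v) := by
  intro q
  obtain ⟨c, hc⟩ : ∃ c, Ideal.Quotient.mk I ∘ c = b.equivFun q :=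
    Ideal.Quotient.mk_surjective.comp_left _
  refine ⟨c, ?_⟩
  rw [LinearMap.comp_apply, Submodule.mkQ_apply, b.mk_linearCombination_eq_equivFun_symm hv, hc,
    LinearEquiv.symm_apply_apply]

theorem ker_linearCombination_le_smul_top
    (b : Basis ι (R ⧸ I) (M ⧸ I • (⊤ : Submodule R M)))
    {v : ι → M} (hv : ∀ i, Submodule.Quotient.mk (v i) = b i) :
    LinearMap.ker (Fintype.linearCombination R v) ≤ I • ⊤ := by
  intro c hc
  have hc' : Ideal.Quotient.mk I ∘ c = 0 := b.equivFun.symm.injective <| by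
    rw [← b.mk_linearCombination_eq_equivFun_symm hv, LinearMap.mem_ker.mp hc, map_zero,
      Submodule.Quotient.mk_zero]
  exact Submodule.mem_smul_top_of_forall_apply_mem fun i =>
    Ideal.Quotient.eq_zero_iff_mem.mp (congrFun hc' i)

end Module.Basis

end LiftingBasis

theorem free_of_flat_of_free_special_fibre_general
    (o : Type) [CommRing o] [IsLocalRing o] [IsNoetherianRing o]
    (R : Type) [CommRing R] [IsLocalRing R] [Algebra o R]
    [IsLocalHom (algebraMap o R)] [Module.Finite o R]
    (M : Type) [AddCommGroup M] [Module o M] [Module R M] [IsScalarTower o R M]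
    [Module.Finite R M] (hMflat : Module.Flat o M)
    (hfree : Module.Free (R ⧸ Ideal.map (algebraMap o R) (maximalIdeal o))
      (M ⧸ (Ideal.map (algebraMap o R) (maximalIdeal o) • (⊤ : Submodule R M)))) :
    Module.Free R M ∧ (Nontrivial M → Module.Flat o R) := by
  set I := (maximalIdeal o).map (algebraMap o R)
  have hI : I ≤ Ideal.jacobson ⊥ := by
    rw [jacobson_eq_maximalIdeal ⊥ bot_ne_top]
    exact map_maximalIdeal_le _
  have : IsNoetherianRing R := isNoetherian_of_tower o inferInstance
  let ι := Module.Free.ChooseBasisIndex (R ⧸ I) (M ⧸ I • (⊤ : Submodule R M))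
  have : Fintype ι := Module.Free.ChooseBasisIndex.fintype _ _
  let b : Module.Basis ι (R ⧸ I) _ := Module.Free.chooseBasis _ _
  choose v hv using fun i => Submodule.Quotient.mk_surjective _ (b i)
  set f := Fintype.linearCombination R v
  have hsurj : Surjective f :=
    f.surjective_of_surjective_mkQ_comp hI (b.surjective_mkQ_comp_linearCombination hv)
  have hker : LinearMap.ker f = ⊥ := by
    refine Submodule.eq_bot_of_le_smul_of_le_jacobson_bot I _ (IsNoetherian.noetherian _) ?_ hI
    exact le_inf le_rfl (b.ker_linearCombination_le_smul_top hv) |>.trans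
      (Module.Flat.ker_inf_map_smul_top_le_map_smul_ker _ hsurj)
  let e := LinearEquiv.ofBijective f ⟨LinearMap.ker_eq_bot.mp hker, hsurj⟩
  refine ⟨.of_equiv e, fun hM => ?_⟩
  have : Module.Flat o (ι → R) := .of_linearEquiv (e.restrictScalars o)
  obtain ⟨i⟩ : Nonempty ι := (isEmpty_or_nonempty _).resolve_left fun _ =>
    not_subsingleton M e.symm.toEquiv.subsingleton
  exact Module.Flat.of_flat_pi (N := fun _ : ι => R) i

/-- Let `o` be a complete noetherian local ring with maximal ideal `m`
and residue field `k`, and `R` a local `o`-algebra with local structure map which is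
finite as an `o`-module.  Let `M` be a finitely generated `R`-module flat over `o`.  If
`M ⊗_o k = M/mM` is free over `R ⊗_o k = R/mR`, then `M` is a free `R`-module; if
moreover `M ≠ 0`, then `R` is flat over `o`. -/
theorem free_of_flat_of_free_special_fibre
    (o : Type) [CommRing o] [IsLocalRing o] [IsNoetherianRing o]
    [IsAdicComplete (maximalIdeal o) o]
    (R : Type) [CommRing R] [IsLocalRing R] [Algebra o R]
    [IsLocalHom (algebraMap o R)] [Module.Finite o R]
    (M : Type) [AddCommGroup M] [Module o M] [Module R M] [IsScalarTower o R M]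
    [Module.Finite R M] (hMflat : Module.Flat o M)
    (hfree : Module.Free (R ⧸ Ideal.map (algebraMap o R) (maximalIdeal o))
      (M ⧸ (Ideal.map (algebraMap o R) (maximalIdeal o) • (⊤ : Submodule R M)))) :
    Module.Free R M ∧ (Nontrivial M → Module.Flat o R) :=
  free_of_flat_of_free_special_fibre_general o R M hMflat hfree
end

section
/- Let o be a complete discrete valuation ring with finite residue field, and let f₁ : X → X₁ and f₂ : X → X₂ be surjective maps of finite sets. Let X₁ ⊔_X X₂ denote the pushout of (X₁ ← X → X₂) in the category of sets, with structural maps g₁ : X₁ → X₁ ⊔_X X₂ and g₂ : X₂ → X₁ ⊔_X X₂. For a finite set Y write o^Y for the o-module of functions Y → o. Define Φ : o^{X₁} ⊕ o^{X₂} → o^X by Φ(φ, ψ) = φ∘f₁ + ψ∘f₂ and Ψ : o^{X₁⊔_X X₂} → o^{X₁} ⊕ o^{X₂} by Ψ(h) = (h∘g₁, −h∘g₂). Then: (a) Ψ is injective and its image equals ker Φ, so 0 → o^{X₁⊔_X X₂} → o^{X₁} ⊕ o^{X₂} → o^X is exact; (b) this sequence is universally exact, i.e. it remains exact after applying − ⊗_o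 R for every commutative o-algebra R finitely generated as an o-module (equivalently, the image of Φ is an o-module direct summand of o^X). -/
open IsLocalRing

section PushoutOfSets

variable {X X₁ X₂ : Type} (f₁ : X → X₁) (f₂ : X → X₂)

/-- The relation generating the pushout `X₁ ⊔_X X₂` of `X₁ ← X → X₂`. -/
def pushoutRel (a b : X₁ ⊕ X₂) : Prop :=
  ∃ x : X, a = Sum.inl (f₁ x) ∧ b = Sum.inr (f₂ x)

/-- The pushout `X₁ ⊔_X X₂` of `X₁ ← X → X₂` in the category of sets. -/
def SetPushout : Type := Quot (pushoutRel f₁ f₂)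

/-- The first structural map `g₁ : X₁ → X₁ ⊔_X X₂`. -/
def pushoutInl : X₁ → SetPushout f₁ f₂ := fun a => Quot.mk _ (Sum.inl a)

/-- The second structural map `g₂ : X₂ → X₁ ⊔_X X₂`. -/
def pushoutInr : X₂ → SetPushout f₁ f₂ := fun a => Quot.mk _ (Sum.inr a)

variable (o : Type) [CommRing o]

/-- The map `Φ : o^{X₁} ⊕ o^{X₂} → o^X`, `Φ(φ, ψ) = φ∘f₁ + ψ∘f₂`. -/
noncomputable def pushoutPhi : ((X₁ → o) × (X₂ → o)) →ₗ[o] (X → o) :=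
  (LinearMap.funLeft o o f₁).comp (LinearMap.fst o (X₁ → o) (X₂ → o)) +
    (LinearMap.funLeft o o f₂).comp (LinearMap.snd o (X₁ → o) (X₂ → o))

/-- The map `Ψ : o^{X₁ ⊔_X X₂} → o^{X₁} ⊕ o^{X₂}`, `Ψ(h) = (h∘g₁, −h∘g₂)`. -/
noncomputable def pushoutPsi : (SetPushout f₁ f₂ → o) →ₗ[o] ((X₁ → o) × (X₂ → o)) :=
  LinearMap.prod (LinearMap.funLeft o o (pushoutInl f₁ f₂))
    (-(LinearMap.funLeft o o (pushoutInr f₁ f₂)))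

end PushoutOfSets


/-! Over any commutative ring `A` the sequence is exact: a pair `(φ, ψ)` killed by `Φ` is exactly a
function on `X₁ ⊔ X₂` compatible with the gluing (after changing the sign of `ψ`), and such
functions are the functions on the pushout; injectivity of `Ψ` holds because, `f₂` being onto,
every point of the pushout comes from `X₁`. For finite `Y` the identification
`R ⊗[o] (Y → o) ≃ (Y → R)` turns the base-changed sequence into the same sequence over `R`. -/

section Exactness

variable {X X₁ X₂ : Type} (f₁ : X → X₁) (f₂ : X → X₂) (A : Type) [CommRing A]

theorem pushoutInl_apply_eq_pushoutInr_apply (x : X) :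
    pushoutInl f₁ f₂ (f₁ x) = pushoutInr f₁ f₂ (f₂ x) :=
  Quot.sound ⟨x, rfl, rfl⟩

theorem pushoutInl_surjective (hf₂ : Function.Surjective f₂) :
    Function.Surjective (pushoutInl f₁ f₂) := by
  rintro ⟨a | b⟩
  · exact ⟨a, rfl⟩
  · obtain ⟨x, rfl⟩ := hf₂ b
    exact ⟨f₁ x, pushoutInl_apply_eq_pushoutInr_apply f₁ f₂ x⟩

theorem pushoutPsi_injective (hf₂ : Function.Surjective f₂) :
    Function.Injective (pushoutPsi f₁ f₂ A) := fun _ _ h =>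
  LinearMap.funLeft_injective_of_surjective A A _ (pushoutInl_surjective f₁ f₂ hf₂)
    (congrArg Prod.fst h)

theorem pushoutPsi_exact : Function.Exact (pushoutPsi f₁ f₂ A) (pushoutPhi f₁ f₂ A) := by
  refine fun y => ⟨fun hΦ => ?_, ?_⟩
  · obtain ⟨φ, ψ⟩ := y
    have hcompat : ∀ a b, pushoutRel f₁ f₂ a b → Sum.elim φ (-ψ) a = Sum.elim φ (-ψ) b := by
      rintro _ _ ⟨x, rfl, rfl⟩
      exact eq_neg_iff_add_eq_zero.mpr (congrFun hΦ x)
    exact ⟨Quot.lift _ hcompat, Prod.ext rfl (neg_neg ψ)⟩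
  · rintro ⟨h, rfl⟩
    funext x
    simp [pushoutPsi, pushoutPhi, pushoutInl_apply_eq_pushoutInr_apply]

end Exactness

theorem LinearMap.injective_of_ladder_linearEquiv {R M N M' N' : Type*} [Semiring R]
    [AddCommMonoid M] [AddCommMonoid N] [AddCommMonoid M'] [AddCommMonoid N']
    [Module R M] [Module R N] [Module R M'] [Module R N']
    {f : M →ₗ[R] N} {g : M' →ₗ[R] N'} {e₁ : M ≃ₗ[R] M'} {e₂ : N ≃ₗ[R] N'}
    (h : g ∘ₗ e₁ = e₂ ∘ₗ f) (hg : Function.Injective g) : Function.Injective f := by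
  have hcomp : Function.Injective (g ∘ₗ e₁.toLinearMap) := hg.comp e₁.injective
  rw [h, LinearMap.coe_comp] at hcomp
  exact hcomp.of_comp

section BaseChange

open TensorProduct

variable (o R : Type) [CommRing o] [CommRing R] [Algebra o R]
  {X X₁ X₂ : Type} [Fintype X₁] [DecidableEq X₁] [Fintype X₂] [DecidableEq X₂]
  (f₁ : X → X₁) (f₂ : X → X₂)

noncomputable def piProdBaseChangeEquiv :
    R ⊗[o] ((X₁ → o) × (X₂ → o)) ≃ₗ[R] (X₁ → R) × (X₂ → R) :=
  (prodRight o R R _ _).trans ((piScalarRight o R R X₁).prodCongr (piScalarRight o R R X₂))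

theorem pushoutPsi_comp_piScalarRight [Fintype (SetPushout f₁ f₂)]
    [DecidableEq (SetPushout f₁ f₂)] :
    pushoutPsi f₁ f₂ R ∘ₗ (piScalarRight o R R (SetPushout f₁ f₂)).toLinearMap =
      (piProdBaseChangeEquiv o R).toLinearMap ∘ₗ (pushoutPsi f₁ f₂ o).baseChange R := by
  refine AlgebraTensorModule.ext fun r h => ?_
  ext <;> simp [piProdBaseChangeEquiv, pushoutPsi]

theorem pushoutPhi_comp_piProdBaseChangeEquiv [Fintype X] [DecidableEq X] :
    pushoutPhi f₁ f₂ R ∘ₗ (piProdBaseChangeEquiv o R).toLinearMap =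
      (piScalarRight o R R X).toLinearMap ∘ₗ (pushoutPhi f₁ f₂ o).baseChange R := by
  refine AlgebraTensorModule.ext fun r y => ?_
  ext
  simp [piProdBaseChangeEquiv, pushoutPhi]

end BaseChange

theorem pushout_sequence_universally_exact_general
    (o : Type) [CommRing o]
    {X X₁ X₂ : Type} [Finite X] [Finite X₁] [Finite X₂]
    (f₁ : X → X₁) (f₂ : X → X₂)
    (hf₂ : Function.Surjective f₂) :
    (Function.Injective (pushoutPsi f₁ f₂ o) ∧
      Function.Exact (pushoutPsi f₁ f₂ o) (pushoutPhi f₁ f₂ o)) ∧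
    ∀ (R : Type) [CommRing R] [Algebra o R] [Module.Finite o R],
      Function.Injective ((pushoutPsi f₁ f₂ o).baseChange R) ∧
      Function.Exact ((pushoutPsi f₁ f₂ o).baseChange R)
        ((pushoutPhi f₁ f₂ o).baseChange R) := by
  classical
  have := Fintype.ofFinite X
  have := Fintype.ofFinite X₁
  have := Fintype.ofFinite X₂
  have : Finite (SetPushout f₁ f₂) := Quot.finite _
  have := Fintype.ofFinite (SetPushout f₁ f₂)
  refine ⟨⟨pushoutPsi_injective f₁ f₂ o hf₂, pushoutPsi_exact f₁ f₂ o⟩, fun R _ _ _ => ⟨?_, ?_⟩⟩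
  · exact LinearMap.injective_of_ladder_linearEquiv (pushoutPsi_comp_piScalarRight o R f₁ f₂)
      (pushoutPsi_injective f₁ f₂ R hf₂)
  · exact (Function.Exact.iff_of_ladder_linearEquiv (pushoutPsi_comp_piScalarRight o R f₁ f₂)
      (pushoutPhi_comp_piProdBaseChangeEquiv o R f₁ f₂)).mp (pushoutPsi_exact f₁ f₂ R)

/-- Let `o` be a complete discrete valuation ring with finite residue
field, `f₁ : X → X₁` and `f₂ : X → X₂` surjections of finite sets.  Then
`0 → o^{X₁⊔_X X₂} → o^{X₁} ⊕ o^{X₂} → o^X` is exact, and it is universally exact: it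
remains exact after `− ⊗_o R` for every commutative `o`-algebra `R` finitely generated
as an `o`-module. -/
theorem pushout_sequence_universally_exact
    (o : Type) [CommRing o] [IsDomain o] [IsDiscreteValuationRing o]
    [IsAdicComplete (maximalIdeal o) o] [Finite (ResidueField o)]
    {X X₁ X₂ : Type} [Finite X] [Finite X₁] [Finite X₂]
    (f₁ : X → X₁) (f₂ : X → X₂)
    (hf₁ : Function.Surjective f₁) (hf₂ : Function.Surjective f₂) :
    (Function.Injective (pushoutPsi f₁ f₂ o) ∧
      Function.Exact (pushoutPsi f₁ f₂ o) (pushoutPhi f₁ f₂ o)) ∧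
    ∀ (R : Type) [CommRing R] [Algebra o R] [Module.Finite o R],
      Function.Injective ((pushoutPsi f₁ f₂ o).baseChange R) ∧
      Function.Exact ((pushoutPsi f₁ f₂ o).baseChange R)
        ((pushoutPhi f₁ f₂ o).baseChange R) :=
  pushout_sequence_universally_exact_general o f₁ f₂ hf₂
end

section
/- Let ℓ ≥ 3 be a prime, k an algebraically closed field of characteristic ℓ, G a finite group, and ρ : G → GL₂(k) a group homomorphism such that the associated representation of G on k² is irreducible (no nonzero proper subspace of k² is stable under all ρ(g)). Let H be a normal subgroup of G such that G/H is cyclic. Then there exists an element σ ∈ H whose order is prime to ℓ and such that ρ(σ) is regular semisimple. -/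
open Polynomial

/-- A 2-dimensional representation `ρ : G → GL₂(k)` is irreducible if no nonzero proper
subspace of `k²` is stable under all `ρ(g)`. -/
def MatIrred {k : Type} [Field k] {G : Type} [Group G]
    (ρ : G →* Matrix.GeneralLinearGroup (Fin 2) k) : Prop :=
  ∀ W : Submodule k (Fin 2 → k),
    (∀ g : G, ∀ x ∈ W, (ρ g : Matrix (Fin 2) (Fin 2) k).mulVec x ∈ W) → W = ⊥ ∨ W = ⊤

/-- An element of `GL₂(k)` is regular semisimple if it has two distinct eigenvalues,
i.e. its characteristic polynomial has two distinct roots. -/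
def IsRegularSemisimple {k : Type} [Field k] (A : Matrix (Fin 2) (Fin 2) k) : Prop :=
  ∃ a b : k, a ≠ b ∧ A.charpoly = (X - C a) * (X - C b)

namespace RSSAux

open Matrix

lemma charpoly_fin2 {k : Type} [CommRing k] (M : Matrix (Fin 2) (Fin 2) k) :
    M.charpoly = X^2 - C M.trace * X + C M.det := by
  rw [Matrix.charpoly, Matrix.det_fin_two, Matrix.trace_fin_two, Matrix.det_fin_two]
  simp [charmatrix_apply_eq, charmatrix_apply_ne]
  ring

lemma ch2 {k : Type} [CommRing k] (A : Matrix (Fin 2) (Fin 2) k) :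
    A * A - A.trace • A + A.det • (1 : Matrix (Fin 2) (Fin 2) k) = 0 := by
  have h := Matrix.aeval_self_charpoly A
  rw [charpoly_fin2] at h
  simpa [sq, Algebra.algebraMap_eq_smul_one, smul_mul_assoc] using h

lemma quad_eq {k : Type} [CommRing k] (t d a b : k)
    (h : X^2 - C t * X + C d = (X - C a) * (X - C b)) : t = a + b ∧ d = a * b := by
  have h2 : (X - C a) * (X - C b) = X^2 - C (a+b) * X + C (a*b) := by
    rw [C_add, C_mul]; ring
  rw [h2] at h
  have h1 := congrArg (fun p => Polynomial.coeff p 1) h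
  have h0 := congrArg (fun p => Polynomial.coeff p 0) h
  simp only [coeff_add, coeff_sub, coeff_X_pow, coeff_C_mul, coeff_X_one, coeff_X_zero,
    coeff_C] at h1 h0
  norm_num at h1 h0
  exact ⟨by linear_combination -h1, h0⟩

lemma trace_det_of_charpoly {k : Type} [CommRing k] (A : Matrix (Fin 2) (Fin 2) k) (a b : k)
    (h : A.charpoly = (X - C a) * (X - C b)) : A.trace = a + b ∧ A.det = a * b := by
  rw [charpoly_fin2] at h
  exact quad_eq _ _ _ _ h

lemma charpoly_split {k : Type} [Field k] [IsAlgClosed k] (A : Matrix (Fin 2) (Fin 2) k) :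
    ∃ a b : k, A.charpoly = (X - C a) * (X - C b) := by
  have hdeg : A.charpoly.degree ≠ 0 := by
    rw [Matrix.charpoly_degree_eq_dim]
    simp
  obtain ⟨a, ha⟩ := IsAlgClosed.exists_root A.charpoly hdeg
  rw [charpoly_fin2] at ha
  have ha' : a^2 - A.trace * a + A.det = 0 := by simpa [IsRoot] using ha
  refine ⟨a, A.trace - a, ?_⟩
  rw [charpoly_fin2]
  have hd : A.det = a * (A.trace - a) := by linear_combination ha'
  rw [hd, C_mul, C_sub]
  ring

lemma eq_zero_of_mulVec {k : Type} [Field k] (E : Matrix (Fin 2) (Fin 2) k)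
    (h : ∀ x, E *ᵥ x = 0) : E = 0 := by
  ext i j
  have := congrFun (h (Pi.single j 1)) i
  simpa [Matrix.mulVec_single] using this

lemma ker_eq_range {k : Type} [Field k] (E : Matrix (Fin 2) (Fin 2) k) (hE : E ≠ 0)
    (h2 : E * E = 0) {x : Fin 2 → k} (hx : E *ᵥ x = 0) : ∃ y, E *ᵥ y = x := by
  set f := E.mulVecLin with hf
  have hle : LinearMap.range f ≤ LinearMap.ker f := by
    rintro _ ⟨y, rfl⟩
    simp only [LinearMap.mem_ker, hf, Matrix.mulVecLin_apply, Matrix.mulVec_mulVec, h2,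
      Matrix.zero_mulVec]
  have hrk := LinearMap.finrank_range_add_finrank_ker f
  have hdim : Module.finrank k (Fin 2 → k) = 2 := by simp
  have hrpos : 0 < Module.finrank k (LinearMap.range f) := by
    rcases Nat.eq_zero_or_pos (Module.finrank k (LinearMap.range f)) with h0 | h
    · exfalso
      apply hE
      apply eq_zero_of_mulVec
      intro x
      have hb : LinearMap.range f = ⊥ := Submodule.finrank_eq_zero.1 h0
      have : f x ∈ (⊥ : Submodule k (Fin 2 → k)) := hb ▸ LinearMap.mem_range_self f x
      simpa [hf] using this
    · exact h
  have heq : LinearMap.range f = LinearMap.ker f := by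
    apply Submodule.eq_of_le_of_finrank_le hle
    omega
  have : x ∈ LinearMap.range f := heq ▸ (by simpa [hf] using hx : x ∈ LinearMap.ker f)
  obtain ⟨y, hy⟩ := this
  exact ⟨y, by simpa [hf] using hy⟩

lemma pair_zero {k : Type} [Field k] (h2 : (2:k) ≠ 0) (N₁ N₂ : Matrix (Fin 2) (Fin 2) k)
    (hN1 : N₁*N₁ = 0) (hN2 : N₂*N₂ = 0) (ht1 : N₁.trace = 0) (ht2 : N₂.trace = 0)
    (ht : (N₁*N₂).trace = 0) :
    N₁*N₂ = 0 ∧ N₂*N₁ = 0 := by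
  set S := N₁ + N₂ with hSdef
  have htS : S.trace = 0 := by simp [hSdef, Matrix.trace_add, ht1, ht2]
  have hS := ch2 S
  rw [htS, zero_smul, sub_zero] at hS
  have hanti' : N₁*N₂ + N₂*N₁ = (-S.det) • 1 := by
    have hexp : S * S = N₁*N₂ + N₂*N₁ := by
      simp [hSdef, add_mul, mul_add, hN1, hN2]; abel
    rw [hexp] at hS
    rw [neg_smul]
    linear_combination (norm := abel) hS
  have hdet0 : S.det = 0 := by
    have := congrArg Matrix.trace hanti'
    rw [Matrix.trace_add, Matrix.trace_mul_comm N₂ N₁, ht, Matrix.trace_smul] at this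
    simp [Matrix.trace_one] at this
    rcases this with h | h
    · exact h
    · exact absurd h h2
  have hanti : N₁*N₂ = -(N₂*N₁) := by
    rw [hdet0] at hanti'
    simp at hanti'
    linear_combination (norm := abel) hanti'
  have hE0 : N₂ * N₁ = 0 := by
    by_contra hE
    have hN1E : N₁*(N₂*N₁) = 0 := by
      rw [← mul_assoc, hanti]
      simp [mul_assoc, hN1]
    have hEE : (N₂*N₁)*(N₂*N₁) = 0 := by
      rw [mul_assoc N₂ N₁ (N₂*N₁), hN1E, mul_zero]
    have hEN2 : (N₂*N₁)*N₂ = 0 := by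
      rw [mul_assoc, hanti]
      simp [← mul_assoc, hN2]
    have h12 : N₁ * N₂ = 0 := by
      apply eq_zero_of_mulVec
      intro x
      have hker : (N₂*N₁) *ᵥ (N₂ *ᵥ x) = 0 := by
        rw [Matrix.mulVec_mulVec, hEN2]; simp
      obtain ⟨y, hy⟩ := ker_eq_range (N₂*N₁) hE hEE hker
      calc (N₁ * N₂) *ᵥ x = N₁ *ᵥ (N₂ *ᵥ x) := by rw [Matrix.mulVec_mulVec]
        _ = N₁ *ᵥ ((N₂*N₁) *ᵥ y) := by rw [hy]
        _ = (N₁*(N₂*N₁)) *ᵥ y := by rw [Matrix.mulVec_mulVec]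
        _ = 0 := by rw [hN1E]; simp
    exact hE (by rw [← neg_neg (N₂*N₁), ← hanti, h12, neg_zero])
  exact ⟨by rw [hanti, hE0, neg_zero], hE0⟩

lemma binom_sq_zero {k : Type} [CommRing k] (a : k) (N : Matrix (Fin 2) (Fin 2) k)
    (hN : N * N = 0) :
    ∀ m : ℕ, (a • (1 : Matrix (Fin 2) (Fin 2) k) + N)^(m+1)
      = a^(m+1) • (1 : Matrix (Fin 2) (Fin 2) k) + ((m+1 : ℕ) * a^m) • N := by
  intro m
  induction m with
  | zero => simp
  | succ m ih =>
    rw [pow_succ, ih]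
    simp only [add_mul, mul_add, smul_mul_assoc, mul_smul_comm, hN, smul_zero, one_mul, mul_one,
      smul_smul]
    push_cast
    match_scalars <;> ring

lemma mulVec_pow_eigen {k : Type} [CommRing k] (A : Matrix (Fin 2) (Fin 2) k) (u : Fin 2 → k)
    (c : k) (h : A *ᵥ u = c • u) : ∀ m : ℕ, (A^m) *ᵥ u = c^m • u := by
  intro m
  induction m with
  | zero => simp
  | succ m ih =>
    rw [pow_succ, ← Matrix.mulVec_mulVec, h, Matrix.mulVec_smul, ih, smul_smul, pow_succ]
    ring_nf

lemma scalar_t {k : Type} [Field k] (a b t : k) (ha : a ≠ 0) (hb : b ≠ 0) (h2 : (2:k) ≠ 0)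
    (e1 : (t + 2*a*b)^2 = 4*(a*a*(b*b)))
    (e2 : (2*a*t + 2*(a*a)*b)^2 = 4*((a*a)*(a*a)*(b*b))) : t = 0 := by
  have q1 : t*(t + 4*a*b) = 0 := by linear_combination e1
  have q2 : (2*a)^2 * (t*(t + 2*a*b)) = 0 := by linear_combination e2
  have q2' : t*(t+2*a*b) = 0 := by
    rcases mul_eq_zero.1 q2 with h | h
    · exact absurd h (pow_ne_zero _ (mul_ne_zero h2 ha))
    · exact h
  have h3 : t * (2*a*b) = 0 := by linear_combination q1 - q2'
  rcases mul_eq_zero.1 h3 with h | h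
  · exact h
  · exact absurd h (mul_ne_zero (mul_ne_zero h2 ha) hb)

lemma sq_sub_smul {k : Type} [CommRing k] (A : Matrix (Fin 2) (Fin 2) k) (a b : k)
    (h : A.trace = a + b) (hd : A.det = a * b) :
    (A - a • 1) * (A - b • 1) = 0 := by
  have e := ch2 A
  rw [h, hd] at e
  calc (A - a • 1) * (A - b • 1)
      = A*A - (a+b) • A + (a*b) • (1 : Matrix (Fin 2) (Fin 2) k) := by
        simp only [sub_mul, mul_sub, smul_mul_assoc, mul_smul_comm, one_mul, mul_one, smul_smul]
        match_scalars <;> ring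
    _ = 0 := e

lemma trace_prod {k : Type} [CommRing k] (A B : Matrix (Fin 2) (Fin 2) k) (a b : k)
    (htA : A.trace = 2*a) (htB : B.trace = 2*b) :
    (A*B).trace = ((A - a•1)*(B - b•1)).trace + 2*a*b := by
  have hexp : (A - a•1)*(B - b•1) = A*B - a•B - b•A + (a*b) • (1 : Matrix (Fin 2) (Fin 2) k) := by
    simp only [sub_mul, mul_sub, smul_mul_assoc, mul_smul_comm, one_mul, mul_one, smul_smul]
    match_scalars <;> ring
  have := congrArg Matrix.trace hexp
  simp only [Matrix.trace_add, Matrix.trace_sub, Matrix.trace_smul, Matrix.trace_one,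
    smul_eq_mul, htA, htB] at this
  rw [this]
  simp [Fintype.card_fin]
  ring

lemma sq_eq {k : Type} [CommRing k] (A : Matrix (Fin 2) (Fin 2) k) (a : k)
    (hNA : (A - a•1)*(A - a•1) = 0) :
    A * A = (2*a) • A - (a*a) • (1 : Matrix (Fin 2) (Fin 2) k) := by
  have hexp : (A - a•1)*(A - a•1) = A*A - (2*a) • A + (a*a) • (1 : Matrix (Fin 2) (Fin 2) k) := by
    simp only [sub_mul, mul_sub, smul_mul_assoc, mul_smul_comm, one_mul, mul_one, smul_smul]
    match_scalars <;> ring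
  rw [hexp] at hNA
  linear_combination (norm := abel) hNA

end RSSAux

open RSSAux Matrix

/-- Let `ℓ ≥ 3` be a prime, `k` an algebraically closed field of
characteristic `ℓ`, `G` a finite group and `ρ : G → GL₂(k)` irreducible.  If `H` is a
normal subgroup of `G` with `G/H` cyclic, then there is `σ ∈ H` of order prime to `ℓ`
such that `ρ(σ)` is regular semisimple. -/
theorem exists_regular_semisimple_in_normal_subgroup
    (ℓ : ℕ) (hℓ : ℓ.Prime) (hℓ3 : 3 ≤ ℓ)
    (k : Type) [Field k] [IsAlgClosed k] [CharP k ℓ]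
    (G : Type) [Group G] [Finite G]
    (ρ : G →* Matrix.GeneralLinearGroup (Fin 2) k) (hirr : MatIrred ρ)
    (H : Subgroup G) [hH : H.Normal] (hcyc : IsCyclic (G ⧸ H)) :
    ∃ σ ∈ H, (orderOf σ).Coprime ℓ ∧
      IsRegularSemisimple (ρ σ : Matrix (Fin 2) (Fin 2) k) := by
  classical
  haveI : Fact ℓ.Prime := ⟨hℓ⟩
  by_contra hcon
  push_neg at hcon
  -- notation
  set M : G → Matrix (Fin 2) (Fin 2) k := fun g => (ρ g : Matrix (Fin 2) (Fin 2) k) with hM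
  have hM1 : M 1 = 1 := by simp [hM]
  have hMmul : ∀ g h : G, M (g*h) = M g * M h := by intro g h; simp [hM]
  have hMpow : ∀ (g : G) (n : ℕ), M (g^n) = (M g)^n := by intro g n; simp [hM]
  have hMinv : ∀ g : G, M g * M g⁻¹ = 1 := by
    intro g; rw [← hMmul, mul_inv_cancel, hM1]
  have hMinv' : ∀ g : G, M g⁻¹ * M g = 1 := by
    intro g; rw [← hMmul, inv_mul_cancel, hM1]
  have h2 : (2:k) ≠ 0 := by
    have : ¬ (ℓ ∣ 2) := by
      intro hd
      have := Nat.le_of_dvd (by norm_num) hd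
      omega
    intro h
    exact this ((CharP.cast_eq_zero_iff k ℓ 2).1 (by exact_mod_cast h))
  have hdetM : ∀ g : G, (M g).det ≠ 0 := by
    intro g
    have := congrArg Matrix.det (hMinv g)
    rw [Matrix.det_mul, Matrix.det_one] at this
    exact left_ne_zero_of_mul_eq_one this
  -- Step A+B: every element of H has equal eigenvalues, with full data
  have hch : ∀ σ ∈ H, ∃ a : k, a ≠ 0 ∧ (M σ).trace = 2*a ∧ (M σ).det = a*a ∧
      (M σ - a•1) * (M σ - a•1) = 0 := by
    intro σ hσ
    obtain ⟨a, b, hab⟩ := charpoly_split (M σ)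
    obtain ⟨htr, hdet⟩ := trace_det_of_charpoly _ a b hab
    -- the ℓ'-part of σ maps to a scalar matrix
    have hn : orderOf σ ≠ 0 := (orderOf_pos σ).ne'
    set p := ℓ ^ ((orderOf σ).factorization ℓ) with hp
    have hpdvd : p ∣ orderOf σ := Nat.ordProj_dvd _ _
    set σ' := σ ^ p with hσ'def
    have hσ' : σ' ∈ H := H.pow_mem hσ p
    have hord : orderOf σ' = orderOf σ / p := by
      rw [hσ'def, orderOf_pow, Nat.gcd_eq_right hpdvd]
    have hcop : (orderOf σ').Coprime ℓ := by
      rw [hord, hp]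
      exact (Nat.coprime_ordCompl hℓ hn).symm
    have hscal : ∃ c : k, c ≠ 0 ∧ M σ' = c • 1 := by
      obtain ⟨c, d, hcd⟩ := charpoly_split (M σ')
      have hcd' : c = d := by
        by_contra hne
        exact hcon σ' hσ' hcop ⟨c, d, hne, hcd⟩
      subst hcd'
      obtain ⟨htr', hdet'⟩ := trace_det_of_charpoly _ c c hcd
      have htr2 : (M σ').trace = 2*c := by rw [htr']; ring
      have hNN : (M σ' - c•1) * (M σ' - c•1) = 0 :=
        sq_sub_smul _ c c (by rw [htr']) hdet'
      set N := M σ' - c•1 with hNdef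
      have hMs : M σ' = c • 1 + N := by rw [hNdef]; abel
      have htrN : N.trace = 0 := by
        rw [hNdef, Matrix.trace_sub, htr2, Matrix.trace_smul, Matrix.trace_one]
        simp [Fintype.card_fin]
        ring
      -- (M σ')^m = 1
      have hm0 : orderOf σ' ≠ 0 := (orderOf_pos σ').ne'
      obtain ⟨m', hm'⟩ : ∃ m', orderOf σ' = m' + 1 := ⟨orderOf σ' - 1, by omega⟩
      rw [hm'] at hcop
      have hpow1 : (M σ')^(m'+1) = 1 := by
        rw [← hm', ← hMpow, pow_orderOf_eq_one σ', hM1]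
      rw [hMs, binom_sq_zero c N hNN m'] at hpow1
      -- take traces
      have htreq := congrArg Matrix.trace hpow1
      simp only [Matrix.trace_add, Matrix.trace_smul, Matrix.trace_one, htrN, smul_eq_mul,
        mul_zero, add_zero, Fintype.card_fin] at htreq
      have hcm : c^(m'+1) = 1 := by
        have : (2:k) * c^(m'+1) = 2 * 1 := by
          rw [mul_one]
          linear_combination htreq
        exact mul_left_cancel₀ h2 this
      have hc0 : c ≠ 0 := by
        intro h
        rw [h, zero_pow (by omega)] at hcm
        exact one_ne_zero hcm.symm
      have hcoeff : ((m'+1 : ℕ) : k) * c^m' ≠ 0 := by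
        apply mul_ne_zero
        · intro h
          have hdvd := (CharP.cast_eq_zero_iff k ℓ (m'+1)).1 (by exact_mod_cast h)
          have hh : ℓ ∣ Nat.gcd (m'+1) ℓ := Nat.dvd_gcd hdvd dvd_rfl
          rw [hcop] at hh
          have := Nat.dvd_one.1 hh
          omega
        · exact pow_ne_zero _ hc0
      have hN0 : N = 0 := by
        have : c^(m'+1) • (1 : Matrix (Fin 2) (Fin 2) k) + ((m'+1 : ℕ) * c^m') • N
            = c^(m'+1) • 1 + 0 := by
          rw [add_zero, hpow1, hcm, one_smul]
        have h' : (((m'+1 : ℕ):k) * c^m') • N = 0 := by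
          have := add_left_cancel this
          exact this
        rcases smul_eq_zero.1 h' with h | h
        · exact absurd h hcoeff
        · exact h
      exact ⟨c, hc0, by rw [hMs, hN0, add_zero]⟩
    obtain ⟨c, hc0, hMσ'⟩ := hscal
    -- show a = b using Frobenius
    have hab2 : a = b := by
      by_contra hne
      have hCH : (M σ - a•1) * (M σ - b•1) = 0 := sq_sub_smul _ a b htr hdet
      have hCH' : (M σ - b•1) * (M σ - a•1) = 0 :=
        sq_sub_smul _ b a (by rw [htr]; ring) (by rw [hdet]; ring)
      have hMp : (M σ)^p = c • 1 := by
        rw [← hMpow, ← hσ'def, hMσ']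
      have key : ∀ x y : k, x ≠ y → (M σ - y•1) ≠ 0 →
          (∀ u, (M σ - x•1) *ᵥ ((M σ - y•1) *ᵥ u) = 0) → x^p = c := by
        intro x y hxy hBne hann
        have hw : ∃ w, (M σ - y•1) *ᵥ w ≠ 0 := by
          by_contra hc
          push_neg at hc
          exact hBne (eq_zero_of_mulVec _ hc)
        obtain ⟨w, hw⟩ := hw
        set u := (M σ - y•1) *ᵥ w with hu
        have heig : M σ *ᵥ u = x • u := by
          have h0 := hann w
          rw [← hu] at h0
          have hrw : (M σ - x•1) *ᵥ u = (M σ) *ᵥ u - x • u := by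
            rw [Matrix.sub_mulVec, Matrix.smul_mulVec, Matrix.one_mulVec]
          rw [hrw] at h0
          exact sub_eq_zero.1 h0
        have hpu := mulVec_pow_eigen (M σ) u x heig p
        rw [hMp] at hpu
        have : (c • (1:Matrix (Fin 2) (Fin 2) k)) *ᵥ u = c • u := by
          rw [Matrix.smul_mulVec, Matrix.one_mulVec]
        rw [this] at hpu
        obtain ⟨i, hi⟩ := Function.ne_iff.1 hw
        have := congrFun hpu i
        simp only [Pi.smul_apply, smul_eq_mul] at this
        have hui : u i ≠ 0 := by simpa [hu] using hi
        have := mul_right_cancel₀ hui this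
        exact this.symm
      have hBa : (M σ - a•1) ≠ 0 := by
        intro h
        have : M σ = a • 1 := by
          have := sub_eq_zero.1 h
          exact this
        rw [this] at htr
        rw [Matrix.trace_smul, Matrix.trace_one] at htr
        simp [Fintype.card_fin] at htr
        exact hne (by linear_combination htr)
      have hBb : (M σ - b•1) ≠ 0 := by
        intro h
        have : M σ = b • 1 := sub_eq_zero.1 h
        rw [this] at htr
        rw [Matrix.trace_smul, Matrix.trace_one] at htr
        simp [Fintype.card_fin] at htr
        exact hne (by linear_combination -htr)
      have hap : a^p = c := key a b hne hBb (by
        intro u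
        rw [Matrix.mulVec_mulVec, hCH, Matrix.zero_mulVec])
      have hbp : b^p = c := key b a (Ne.symm hne) hBa (by
        intro u
        rw [Matrix.mulVec_mulVec, hCH', Matrix.zero_mulVec])
      have : (a - b)^p = 0 := by
        rw [hp, sub_pow_char_pow, ← hp, hap, hbp, sub_self]
      exact hne (sub_eq_zero.1 (pow_eq_zero_iff (by positivity) |>.1 this))
    subst hab2
    have ha0 : a ≠ 0 := by
      intro h
      rw [h] at hdet
      simp at hdet
      exact hdetM σ hdet
    exact ⟨a, ha0, by rw [htr]; ring, hdet, sq_sub_smul _ a a htr hdet⟩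
  -- cross vanishing for pairs in H
  have hcross : ∀ σ ∈ H, ∀ σ' ∈ H, ∀ a b : k,
      (M σ).trace = 2*a → (M σ).det = a*a → (M σ - a•1)*(M σ - a•1) = 0 → a ≠ 0 →
      (M σ').trace = 2*b → (M σ').det = b*b → (M σ' - b•1)*(M σ' - b•1) = 0 → b ≠ 0 →
      (M σ - a•1) * (M σ' - b•1) = 0 ∧ (M σ' - b•1) * (M σ - a•1) = 0 := by
    intro σ hσ σ' hσ' a b htA hdA hNA ha0 htB hdB hNB hb0
    set A := M σ
    set B := M σ'
    set N₁ := A - a•1 with hN1def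
    set N₂ := B - b•1 with hN2def
    have htrN1 : N₁.trace = 0 := by
      rw [hN1def, Matrix.trace_sub, htA, Matrix.trace_smul, Matrix.trace_one]
      simp [Fintype.card_fin]; ring
    have htrN2 : N₂.trace = 0 := by
      rw [hN2def, Matrix.trace_sub, htB, Matrix.trace_smul, Matrix.trace_one]
      simp [Fintype.card_fin]; ring
    -- trace of N₁ N₂ is zero
    have ht : (N₁*N₂).trace = 0 := by
      obtain ⟨cc, hcc0, hPtr, hPdet, _⟩ := hch (σ*σ') (H.mul_mem hσ hσ')
      obtain ⟨dd, hdd0, hQtr, hQdet, _⟩ := hch (σ*σ*σ') (H.mul_mem (H.mul_mem hσ hσ) hσ')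
      have hMP : M (σ*σ') = A * B := hMmul σ σ'
      have hMQ : M (σ*σ*σ') = A * A * B := by
        rw [hMmul (σ*σ) σ', hMmul σ σ]
      rw [hMP] at hPtr hPdet
      rw [hMQ] at hQtr hQdet
      have hPdet' : (A*B).det = A.det * B.det := Matrix.det_mul A B
      have hQdet' : (A*A*B).det = A.det * A.det * B.det := by
        rw [Matrix.det_mul, Matrix.det_mul]
      set t := (N₁*N₂).trace with htdef
      have e1tr : (A*B).trace = t + 2*a*b := trace_prod A B a b htA htB
      have e2tr : (A*A*B).trace = 2*a*t + 2*(a*a)*b := by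
        have hAA := sq_eq A a hNA
        have : A*A*B = (2*a) • (A*B) - (a*a) • B := by
          rw [hAA, sub_mul, smul_mul_assoc, smul_mul_assoc, one_mul]
        rw [this, Matrix.trace_sub, Matrix.trace_smul, Matrix.trace_smul, e1tr, htB]
        simp only [smul_eq_mul]
        ring
      apply scalar_t a b t ha0 hb0 h2
      · rw [← e1tr, hPtr]
        rw [hPdet', hdA, hdB] at hPdet
        rw [hPdet]
        ring
      · rw [← e2tr, hQtr]
        rw [hQdet', hdA, hdB] at hQdet
        rw [hQdet]
        ring
    have hNN1 : N₁ * N₁ = 0 := hNA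
    have hNN2 : N₂ * N₂ = 0 := hNB
    exact pair_zero h2 N₁ N₂ hNN1 hNN2 htrN1 htrN2 ht
  -- case split on whether all of ρ(H) is scalar
  by_cases hall : ∀ σ ∈ H, ∃ c : k, M σ = c • 1
  · -- scalar case: use a lift of a generator of G/H to find a stable line
    haveI : Finite (G ⧸ H) := Quotient.finite _
    obtain ⟨ζ, hζ⟩ := IsCyclic.exists_monoid_generator (α := G ⧸ H)
    obtain ⟨g, hg⟩ := QuotientGroup.mk_surjective ζ
    -- eigenvector of M g
    obtain ⟨a, b, hab⟩ := charpoly_split (M g)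
    obtain ⟨htr, hdet⟩ := trace_det_of_charpoly _ a b hab
    have hCH : (M g - a•1) * (M g - b•1) = 0 := sq_sub_smul _ a b htr hdet
    have heig : ∃ (c : k) (u : Fin 2 → k), u ≠ 0 ∧ (M g) *ᵥ u = c • u := by
      by_cases hB : M g - b•1 = 0
      · refine ⟨b, Pi.single 0 1, ?_, ?_⟩
        · intro h
          have := congrFun h 0
          simp at this
        · have : M g = b • 1 := sub_eq_zero.1 hB
          rw [this, Matrix.smul_mulVec, Matrix.one_mulVec]
      · have hw : ∃ w, (M g - b•1) *ᵥ w ≠ 0 := by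
          by_contra hc
          push_neg at hc
          exact hB (eq_zero_of_mulVec _ hc)
        obtain ⟨w, hw⟩ := hw
        refine ⟨a, (M g - b•1) *ᵥ w, hw, ?_⟩
        have h0 : (M g - a•1) *ᵥ ((M g - b•1) *ᵥ w) = 0 := by
          rw [Matrix.mulVec_mulVec, hCH, Matrix.zero_mulVec]
        rw [Matrix.sub_mulVec, Matrix.smul_mulVec, Matrix.one_mulVec, sub_eq_zero] at h0
        exact h0
    obtain ⟨c, u, hu0, hu⟩ := heig
    set W : Submodule k (Fin 2 → k) := Submodule.span k {u} with hW
    have hgW : ∀ x ∈ W, (M g) *ᵥ x ∈ W := by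
      intro x hx
      obtain ⟨r, rfl⟩ := Submodule.mem_span_singleton.1 hx
      rw [Matrix.mulVec_smul, hu]
      exact Submodule.mem_span_singleton.2 ⟨r * c, by rw [mul_smul]⟩
    have hpowW : ∀ n : ℕ, ∀ x ∈ W, (M (g^n)) *ᵥ x ∈ W := by
      intro n
      induction n with
      | zero => intro x hx; simpa [hM1] using hx
      | succ n ih =>
        intro x hx
        have : M (g^(n+1)) = M (g^n) * M g := by
          rw [pow_succ, hMmul]
        rw [this, ← Matrix.mulVec_mulVec]
        exact ih _ (hgW x hx)
    have hstab : ∀ g' : G, ∀ x ∈ W, (M g') *ᵥ x ∈ W := by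
      intro g' x hx
      obtain ⟨n, hn⟩ := (Submonoid.mem_powers_iff _ _).1 (hζ (QuotientGroup.mk g' : G ⧸ H))
      have hmkpow : (QuotientGroup.mk (g^n) : G ⧸ H) = ζ^n := by
        rw [← hg]
        simp
      have hmem : (g^n)⁻¹ * g' ∈ H := QuotientGroup.eq.1 (hmkpow.trans hn)
      obtain ⟨ch, hch'⟩ := hall _ hmem
      have hg' : g' = g^n * ((g^n)⁻¹ * g') := by group
      rw [hg', hMmul, ← Matrix.mulVec_mulVec]
      apply hpowW n
      rw [hch', Matrix.smul_mulVec, Matrix.one_mulVec]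
      exact W.smul_mem ch hx
    rcases hirr W hstab with hbot | htop
    · have hu' : u ∈ W := Submodule.mem_span_singleton_self u
      rw [hbot] at hu'
      exact hu0 (by simpa using hu')
    · have h1 : Module.finrank k W = 1 := by
        rw [hW]
        exact finrank_span_singleton hu0
      rw [htop] at h1
      simp [finrank_top] at h1
  · -- non-scalar case: ker of the nilpotent part gives a stable line
    push_neg at hall
    obtain ⟨τ, hτ, hτns⟩ := hall
    obtain ⟨a, ha0, htrτ, hdetτ, hNτ⟩ := hch τ hτ
    set N := M τ - a•1 with hNdef
    have hNne : N ≠ 0 := by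
      intro h
      exact hτns a (sub_eq_zero.1 h)
    set W : Submodule k (Fin 2 → k) := LinearMap.ker N.mulVecLin with hW
    have hmemW : ∀ x, x ∈ W ↔ N *ᵥ x = 0 := by
      intro x
      rw [hW, LinearMap.mem_ker, Matrix.mulVecLin_apply]
    have hstab : ∀ g : G, ∀ x ∈ W, (M g) *ᵥ x ∈ W := by
      intro g x hx
      rw [hmemW] at hx ⊢
      -- conjugate of τ
      set τ' := g⁻¹ * τ * g with hτ'def
      have hτ' : τ' ∈ H := by
        have := hH.conj_mem τ hτ g⁻¹
        simpa [hτ'def] using this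
      obtain ⟨a', ha'0, htrτ', hdetτ', hNτ'⟩ := hch τ' hτ'
      have hMτ' : M τ' = M g⁻¹ * M τ * M g := by
        rw [hτ'def, hMmul, hMmul]
      have htreq : (M τ').trace = (M τ).trace := by
        rw [hMτ', Matrix.trace_mul_comm, ← mul_assoc, hMinv g, one_mul]
      have ha'a : a' = a := by
        have : 2*a' = 2*a := by rw [← htrτ', ← htrτ, htreq]
        exact mul_left_cancel₀ h2 this
      rw [ha'a] at htrτ' hdetτ' hNτ'
      set N' := M τ' - a•1 with hN'def
      have hkey : M g * N' = N * M g := by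
        rw [hN'def, hNdef, mul_sub, sub_mul, hMτ', ← mul_assoc, ← mul_assoc, hMinv g, one_mul]
        congr 1
        rw [mul_smul_comm, smul_mul_assoc, mul_one, one_mul]
      have hN'ne : N' ≠ 0 := by
        intro h
        apply hNne
        have : N * M g = 0 := by rw [← hkey, h, mul_zero]
        have h2' : N * M g * M g⁻¹ = 0 := by rw [this, zero_mul]
        rw [mul_assoc, hMinv g, mul_one] at h2'
        exact h2'
      obtain ⟨hcr1, hcr2⟩ := hcross τ hτ τ' hτ' a a htrτ hdetτ hNτ ha0 htrτ' hdetτ' hNτ' ha0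
      -- x ∈ ker N = range N, so N' x = 0
      obtain ⟨y, hy⟩ := ker_eq_range N hNne hNτ hx
      have hN'x : N' *ᵥ x = 0 := by
        rw [← hy, Matrix.mulVec_mulVec, hcr2, Matrix.zero_mulVec]
      calc N *ᵥ ((M g) *ᵥ x) = (N * M g) *ᵥ x := Matrix.mulVec_mulVec x N (M g)
        _ = (M g * N') *ᵥ x := by rw [hkey]
        _ = (M g) *ᵥ (N' *ᵥ x) := (Matrix.mulVec_mulVec x (M g) N').symm
        _ = 0 := by rw [hN'x, Matrix.mulVec_zero]
    rcases hirr W hstab with hbot | htop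
    · -- W ≠ ⊥ : N has a nonzero kernel vector
      have hw : ∃ w, N *ᵥ w ≠ 0 := by
        by_contra hc
        push_neg at hc
        exact hNne (eq_zero_of_mulVec _ hc)
      obtain ⟨w, hw⟩ := hw
      have : N *ᵥ w ∈ W := by
        rw [hmemW, Matrix.mulVec_mulVec, hNτ, Matrix.zero_mulVec]
      rw [hbot] at this
      exact hw (by simpa using this)
    · -- W ≠ ⊤ : N ≠ 0
      apply hNne
      apply eq_zero_of_mulVec
      intro x
      have : x ∈ W := htop ▸ Submodule.mem_top
      rwa [hmemW] at this
end

section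
/- Let ℓ ≥ 3 be a prime, k an algebraically closed field of characteristic ℓ, G a finite group, and ρ : G → GL₂(k) a monomial representation: there exist two one-dimensional subspaces L₁, L₂ of k² with k² = L₁ ⊕ L₂ such that every ρ(g) permutes the pair {L₁, L₂}. Let H be a subgroup of G such that the restriction of ρ to H is irreducible on k². Then for every nonzero irreducible G-subrepresentation N of ad⁰ρ, there exists σ ∈ H whose order is prime to ℓ, such that ρ(σ) is regular semisimple and the subspace of N fixed by σ is nonzero, i.e. there is a nonzero A ∈ N with ρ(σ)·A = A·ρ(σ). -/
open Polynomial

/-!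
Choose nonzero `v₁ ∈ L₁`, `v₂ ∈ L₂`; in the basis `v₁, v₂` every `ρ g` is diagonal or
anti-diagonal. Irreducibility of `ρ|_H` provides an anti-diagonal `τ ∈ H` (otherwise `L₁` is
`H`-stable) and a diagonal `δ ∈ H` with distinct eigenvalues (otherwise every element of `H` is a
scalar multiple of `1` or of `ρ τ⁻¹`, and an eigenline of `ρ τ⁻¹` is `H`-stable).

The anti-diagonal matrices form a `G`-stable subspace, so the irreducible `N` either meets it
trivially or lies in it. In the first case `δ A δ⁻¹ - A` is anti-diagonal and lies in `N`, so `δ`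
centralizes `N`. In the second case, an anti-diagonal `σ` has scalar square, hence commutes with
`A + σ A σ⁻¹`, and has the distinct eigenvalues `±√(σ²)` because `ℓ ≠ 2`; for `σ = τ` or `σ = δτ`
this element is nonzero, since otherwise `δ` would commute with the nonzero anti-diagonal `A`.

Finally the `ℓ`-regular part `σ ^ ℓ ^ v` of the element found still centralizes `A`, and its
eigenvalues, the images of those of `σ` under the injective `v`-th power of Frobenius, are still
distinct.
-/

open Matrix Module Submodule

section Eigenvalues

variable {k : Type*} [Field k] {n : Type*} [Fintype n] [DecidableEq n]

def HasDistinctEigenvalues (M : Matrix n n k) : Prop :=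
  ∃ a b : k, a ≠ b ∧ End.HasEigenvalue (toLin' M) a ∧ End.HasEigenvalue (toLin' M) b

theorem hasEigenvalue_toLin'_of_mulVec_eq {M : Matrix n n k} {v : n → k} {a : k} (hv : v ≠ 0)
    (h : M *ᵥ v = a • v) : End.HasEigenvalue (toLin' M) a :=
  End.hasEigenvalue_of_hasEigenvector ⟨End.mem_eigenspace_iff.mpr (by rwa [toLin'_apply]), hv⟩

theorem hasEigenvalue_of_mul_self_eq_smul_one {M : Matrix n n k} {r : k}
    (hM : M * M = (r * r) • 1) {v : n → k} (hv : M *ᵥ v + r • v ≠ 0) :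
    End.HasEigenvalue (toLin' M) r :=
  hasEigenvalue_toLin'_of_mulVec_eq hv <| by
    rw [mulVec_add, mulVec_mulVec, hM, mulVec_smul, smul_mulVec, one_mulVec]
    module

theorem HasDistinctEigenvalues.pow_expChar_pow {ℓ : ℕ} [ExpChar k ℓ] {M : Matrix n n k}
    (h : HasDistinctEigenvalues M) (m : ℕ) : HasDistinctEigenvalues (M ^ ℓ ^ m) := by
  obtain ⟨a, b, hab, ha, hb⟩ := h
  refine ⟨a ^ ℓ ^ m, b ^ ℓ ^ m, (iterateFrobenius k ℓ m).injective.ne hab, ?_, ?_⟩ <;>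
    rw [toLin'_pow]
  exacts [ha.pow _, hb.pow _]

end Eigenvalues

theorem HasDistinctEigenvalues.isRegularSemisimple {k : Type} [Field k]
    {M : Matrix (Fin 2) (Fin 2) k} (h : HasDistinctEigenvalues M) : IsRegularSemisimple M := by
  obtain ⟨a, b, hab, ha, hb⟩ := h
  have dvd_charpoly : ∀ μ, End.HasEigenvalue (toLin' M) μ → X - C μ ∣ M.charpoly := fun μ hμ => by
    rwa [dvd_iff_isRoot, ← charpoly_toLin', ← End.hasEigenvalue_iff_isRoot_charpoly]
  refine ⟨a, b, hab, eq_of_monic_of_dvd_of_natDegree_le ((monic_X_sub_C a).mul (monic_X_sub_C b))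
    M.charpoly_monic ((isCoprime_X_sub_C_of_isUnit_sub (sub_ne_zero.2 hab).isUnit).mul_dvd
      (dvd_charpoly a ha) (dvd_charpoly b hb)) ?_⟩
  rw [M.charpoly_natDegree_eq_dim, natDegree_mul (X_sub_C_ne_zero a) (X_sub_C_ne_zero b),
    natDegree_X_sub_C, natDegree_X_sub_C, Fintype.card_fin]

theorem coprime_orderOf_pow_ordProj {G : Type*} [Group G] [Finite G] {p : ℕ} (hp : p.Prime)
    (g : G) : (orderOf (g ^ p ^ (orderOf g).factorization p)).Coprime p := by
  rw [orderOf_pow, Nat.gcd_eq_right (Nat.ordProj_dvd _ p)]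
  exact (Nat.coprime_ordCompl hp (orderOf_pos g).ne').symm

theorem exists_ne_zero_eq_span_singleton {k V : Type*} [Field k] [AddCommGroup V] [Module k V]
    {L : Submodule k V} (hL : finrank k L = 1) :
    ∃ v ≠ 0, L = k ∙ v := by
  obtain ⟨v, hv, hv0⟩ := L.exists_mem_ne_zero_of_ne_bot (by rintro rfl; simp at hL)
  exact ⟨v, hv0, eq_span_singleton_of_mem_of_finrank_eq_one hL hv hv0⟩

section Lines

variable {k : Type*} [Field k] {n : Type*} [Fintype n]

theorem map_mulVecLin_mul (L : Submodule k (n → k)) (A B : Matrix n n k) :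
    L.map (A * B).mulVecLin = (L.map B.mulVecLin).map A.mulVecLin := by
  rw [mulVecLin_mul, Submodule.map_comp]

theorem mulVec_mem_of_map_eq {M : Matrix n n k} {L L' : Submodule k (n → k)}
    (h : L.map M.mulVecLin = L') {x : n → k} (hx : x ∈ L) : M *ᵥ x ∈ L' :=
  h ▸ mem_map_of_mem hx

theorem mulVec_mem_of_mem_span_singleton {M : Matrix n n k} {v x : n → k} {L : Submodule k (n → k)}
    (hx : x ∈ k ∙ v) (hv : M *ᵥ v ∈ L) : M *ᵥ x ∈ L := by
  obtain ⟨c, rfl⟩ := mem_span_singleton.mp hx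
  rw [mulVec_smul]
  exact L.smul_mem c hv

theorem eq_zero_of_mem_span_singleton_of_mulVec_eq {M : Matrix n n k} {w x : n → k} {a b : k}
    (hab : a ≠ b) (hw : M *ᵥ w = b • w) (hx : x ∈ k ∙ w) (hMx : M *ᵥ x = a • x) : x = 0 := by
  obtain ⟨c, rfl⟩ := mem_span_singleton.mp hx
  have : (a - b) • c • w = 0 := by
    rw [sub_smul, ← hMx, mulVec_smul, hw, smul_comm, sub_self]
  exact (smul_eq_zero.mp this).resolve_left (sub_ne_zero.mpr hab)

variable {v₁ v₂ : n → k}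

theorem mulVec_sub_smul_mem_span_singleton (hc : IsCompl (k ∙ v₁) (k ∙ v₂)) {M : Matrix n n k}
    {a b : k} (h₁ : M *ᵥ v₁ = a • v₁) (h₂ : M *ᵥ v₂ = b • v₂) (x : n → k) :
    M *ᵥ x - a • x ∈ k ∙ v₂ := by
  have hx : x ∈ span k {v₁, v₂} := by rw [span_insert, hc.sup_eq_top]; trivial
  obtain ⟨p, q, rfl⟩ := mem_span_pair.mp hx
  refine mem_span_singleton.mpr ⟨q * (b - a), ?_⟩
  rw [mulVec_add, mulVec_smul, mulVec_smul, h₁, h₂]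
  module

def PermutesLines (L₁ L₂ : Submodule k (n → k)) (M : Matrix n n k) : Prop :=
  (L₁.map M.mulVecLin = L₁ ∧ L₂.map M.mulVecLin = L₂) ∨
    (L₁.map M.mulVecLin = L₂ ∧ L₂.map M.mulVecLin = L₁)

variable [DecidableEq n]

theorem map_mulVecLin_inv_of_map_eq {u : GL n k} {L L' : Submodule k (n → k)}
    (h : L.map (u : Matrix n n k).mulVecLin = L') : L'.map (u : Matrix n n k)⁻¹.mulVecLin = L := by
  rw [← h, ← map_mulVecLin_mul, inv_mul_of_invertible, mulVecLin_one, Submodule.map_id]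

theorem mulVec_ne_zero (u : GL n k) {v : n → k} (hv : v ≠ 0) : (u : Matrix n n k) *ᵥ v ≠ 0 := by
  intro h
  apply hv
  rw [← one_mulVec v, ← Units.inv_mul u, ← mulVec_mulVec, h, mulVec_zero]

theorem ne_zero_of_mulVec_eq_smul (u : GL n k) {v w : n → k} {a : k} (hv : v ≠ 0)
    (h : (u : Matrix n n k) *ᵥ v = a • w) : a ≠ 0 := by
  rintro rfl
  exact mulVec_ne_zero u hv (by rw [h, zero_smul])

theorem inv_mulVec_eq_inv_smul (u : GL n k) {v w : n → k} {a : k} (hv : v ≠ 0)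
    (h : (u : Matrix n n k) *ᵥ v = a • w) : (u : Matrix n n k)⁻¹ *ᵥ w = a⁻¹ • v := by
  calc (u : Matrix n n k)⁻¹ *ᵥ w = a⁻¹ • ((u : Matrix n n k)⁻¹ *ᵥ (a • w)) := by
        rw [mulVec_smul, inv_smul_smul₀ (ne_zero_of_mulVec_eq_smul u hv h)]
    _ = a⁻¹ • v := by rw [← h, mulVec_mulVec, inv_mul_of_invertible, one_mulVec]

theorem commute_add_conj_of_mul_self_eq_smul_one (u : GL n k) {c : k}
    (hu : (u : Matrix n n k) * u = c • 1) (A : Matrix n n k) :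
    Commute (u : Matrix n n k) (A + u * A * (u : Matrix n n k)⁻¹) := by
  have hAu : A * u = c • (A * (u : Matrix n n k)⁻¹) := by
    calc A * u = A * (u * u) * (u : Matrix n n k)⁻¹ := by simp [mul_assoc]
      _ = c • (A * (u : Matrix n n k)⁻¹) := by rw [hu, mul_smul_comm, mul_one, smul_mul_assoc]
  show _ * _ = _ * _
  rw [mul_add, add_mul, ← mul_assoc, ← mul_assoc, hu, mul_assoc (_ * A), inv_mul_of_invertible,
    mul_one, hAu, smul_mul_assoc, smul_mul_assoc, one_mul, add_comm]

/-- In a basis adapted to `L₁ ⊕ L₂`, the anti-diagonal matrices. -/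
def swapSubmodule (L₁ L₂ : Submodule k (n → k)) : Submodule k (Matrix n n k) :=
  (compatibleMaps L₁ L₂ ⊓ compatibleMaps L₂ L₁).comap toLin'.toLinearMap

theorem mem_swapSubmodule {L₁ L₂ : Submodule k (n → k)} {A : Matrix n n k} :
    A ∈ swapSubmodule L₁ L₂ ↔ L₁.map A.mulVecLin ≤ L₂ ∧ L₂.map A.mulVecLin ≤ L₁ := by
  simp [swapSubmodule, compatibleMaps, map_le_iff_le_comap, toLin'_apply']

theorem conj_mem_swapSubmodule {L₁ L₂ : Submodule k (n → k)} {u : GL n k}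
    (hu : PermutesLines L₁ L₂ u) {A : Matrix n n k} (hA : A ∈ swapSubmodule L₁ L₂) :
    (u : Matrix n n k) * A * (u : Matrix n n k)⁻¹ ∈ swapSubmodule L₁ L₂ := by
  rw [mem_swapSubmodule] at hA ⊢
  simp only [map_mulVecLin_mul]
  rcases hu with ⟨h₁, h₂⟩ | ⟨h₁, h₂⟩
  · rw [map_mulVecLin_inv_of_map_eq h₁, map_mulVecLin_inv_of_map_eq h₂]
    exact ⟨(map_mono hA.1).trans h₂.le, (map_mono hA.2).trans h₁.le⟩
  · rw [map_mulVecLin_inv_of_map_eq h₁, map_mulVecLin_inv_of_map_eq h₂]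
    exact ⟨(map_mono hA.2).trans h₁.le, (map_mono hA.1).trans h₂.le⟩

theorem mem_swapSubmodule_span_singleton {A : Matrix n n k} :
    A ∈ swapSubmodule (k ∙ v₁) (k ∙ v₂) ↔ A *ᵥ v₁ ∈ k ∙ v₂ ∧ A *ᵥ v₂ ∈ k ∙ v₁ := by
  simp [mem_swapSubmodule, map_span, span_singleton_le_iff_mem]

theorem eq_of_mulVec_eq_of_isCompl (hc : IsCompl (k ∙ v₁) (k ∙ v₂)) {A B : Matrix n n k}
    (h₁ : A *ᵥ v₁ = B *ᵥ v₁) (h₂ : A *ᵥ v₂ = B *ᵥ v₂) : A = B := by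
  refine toLin'.injective (LinearMap.ext_on (s := {v₁, v₂}) ?_ ?_)
  · rw [span_insert, hc.sup_eq_top]
  · rintro _ (rfl | rfl) <;> simpa [toLin'_apply]

theorem conj_sub_mulVec_mem_span_singleton (hc : IsCompl (k ∙ v₁) (k ∙ v₂)) (hv₁ : v₁ ≠ 0)
    {u : GL n k} {a b : k} (h₁ : (u : Matrix n n k) *ᵥ v₁ = a • v₁)
    (h₂ : (u : Matrix n n k) *ᵥ v₂ = b • v₂) (A : Matrix n n k) :
    ((u : Matrix n n k) * A * (u : Matrix n n k)⁻¹ - A) *ᵥ v₁ ∈ k ∙ v₂ := by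
  have ha := ne_zero_of_mulVec_eq_smul u hv₁ h₁
  have key : ((u : Matrix n n k) * A * (u : Matrix n n k)⁻¹ - A) *ᵥ v₁ =
      a⁻¹ • ((u : Matrix n n k) *ᵥ (A *ᵥ v₁) - a • (A *ᵥ v₁)) := by
    rw [sub_mulVec, ← mulVec_mulVec, ← mulVec_mulVec, inv_mulVec_eq_inv_smul u hv₁ h₁,
      mulVec_smul, mulVec_smul, smul_sub, inv_smul_smul₀ ha]
  rw [key]
  exact smul_mem _ _ (mulVec_sub_smul_mem_span_singleton hc h₁ h₂ _)

theorem conj_sub_mem_swapSubmodule (hc : IsCompl (k ∙ v₁) (k ∙ v₂)) (hv₁ : v₁ ≠ 0)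
    (hv₂ : v₂ ≠ 0) {u : GL n k} {a b : k} (h₁ : (u : Matrix n n k) *ᵥ v₁ = a • v₁)
    (h₂ : (u : Matrix n n k) *ᵥ v₂ = b • v₂) (A : Matrix n n k) :
    (u : Matrix n n k) * A * (u : Matrix n n k)⁻¹ - A ∈
      swapSubmodule (k ∙ v₁) (k ∙ v₂) :=
  mem_swapSubmodule_span_singleton.mpr ⟨conj_sub_mulVec_mem_span_singleton hc hv₁ h₁ h₂ A,
    conj_sub_mulVec_mem_span_singleton hc.symm hv₂ h₂ h₁ A⟩

theorem eq_zero_of_commute_of_mem_swapSubmodule (hc : IsCompl (k ∙ v₁) (k ∙ v₂))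
    {M A : Matrix n n k} {a b : k} (hab : a ≠ b) (h₁ : M *ᵥ v₁ = a • v₁) (h₂ : M *ᵥ v₂ = b • v₂)
    (hMA : Commute M A) (hA : A ∈ swapSubmodule (k ∙ v₁) (k ∙ v₂)) : A = 0 := by
  have hMA' : ∀ v, M *ᵥ (A *ᵥ v) = A *ᵥ (M *ᵥ v) := fun v => by
    rw [mulVec_mulVec, hMA.eq, ← mulVec_mulVec]
  obtain ⟨hA₁, hA₂⟩ := mem_swapSubmodule_span_singleton.mp hA
  refine eq_of_mulVec_eq_of_isCompl hc ?_ ?_ <;> rw [zero_mulVec]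
  · exact eq_zero_of_mem_span_singleton_of_mulVec_eq hab h₂ hA₁ (by rw [hMA', h₁, mulVec_smul])
  · exact eq_zero_of_mem_span_singleton_of_mulVec_eq hab.symm h₁ hA₂ (by rw [hMA', h₂, mulVec_smul])

theorem add_conj_ne_zero_or_add_conj_ne_zero (hc : IsCompl (k ∙ v₁) (k ∙ v₂)) {δ : GL n k}
    {a b : k} (hab : a ≠ b) (h₁ : (δ : Matrix n n k) *ᵥ v₁ = a • v₁)
    (h₂ : (δ : Matrix n n k) *ᵥ v₂ = b • v₂) {A : Matrix n n k}
    (hA : A ∈ swapSubmodule (k ∙ v₁) (k ∙ v₂)) (hA0 : A ≠ 0) (τ : GL n k) :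
    A + τ * A * (τ : Matrix n n k)⁻¹ ≠ 0 ∨
      A + ((δ * τ : GL n k) : Matrix n n k) * A * ((δ * τ : GL n k) : Matrix n n k)⁻¹ ≠ 0 := by
  by_contra! h
  obtain ⟨hτ, hδτ⟩ := h
  have hτ' : (τ : Matrix n n k) * A * (τ : Matrix n n k)⁻¹ = -A :=
    eq_neg_iff_add_eq_zero.mpr (by rwa [add_comm])
  have hδτ' : ((δ * τ : GL n k) : Matrix n n k) * A * ((δ * τ : GL n k) : Matrix n n k)⁻¹ =
      -((δ : Matrix n n k) * A * (δ : Matrix n n k)⁻¹) := by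
    calc _ = (δ : Matrix n n k) * ((τ : Matrix n n k) * A * (τ : Matrix n n k)⁻¹) *
          (δ : Matrix n n k)⁻¹ := by
          simp only [Units.val_mul, Matrix.mul_inv_rev, mul_assoc]
      _ = _ := by rw [hτ', mul_neg, neg_mul]
  rw [hδτ', add_neg_eq_zero, eq_comm, ← coe_units_inv, Units.mul_inv_eq_iff_eq_mul] at hδτ
  exact hA0 (eq_zero_of_commute_of_mem_swapSubmodule hc hab h₁ h₂ hδτ hA)

theorem exists_mul_self_eq_smul_one_of_swaps (hc : IsCompl (k ∙ v₁) (k ∙ v₂)) (hv₁ : v₁ ≠ 0)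
    (hv₂ : v₂ ≠ 0) {u : GL n k} (h₁ : (u : Matrix n n k) *ᵥ v₁ ∈ k ∙ v₂)
    (h₂ : (u : Matrix n n k) *ᵥ v₂ ∈ k ∙ v₁) :
    ∃ c : k, c ≠ 0 ∧ (u : Matrix n n k) * u = c • 1 := by
  obtain ⟨β, hβ⟩ := mem_span_singleton.mp h₁
  obtain ⟨γ, hγ⟩ := mem_span_singleton.mp h₂
  refine ⟨β * γ, mul_ne_zero (ne_zero_of_mulVec_eq_smul u hv₁ hβ.symm)
    (ne_zero_of_mulVec_eq_smul u hv₂ hγ.symm), eq_of_mulVec_eq_of_isCompl hc ?_ ?_⟩ <;>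
    rw [← mulVec_mulVec, smul_mulVec, one_mulVec]
  · rw [← hβ, mulVec_smul, ← hγ, smul_smul]
  · rw [← hγ, mulVec_smul, ← hβ, smul_smul, mul_comm]

theorem hasDistinctEigenvalues_of_swaps [IsAlgClosed k] (h2 : (2 : k) ≠ 0)
    (hc : IsCompl (k ∙ v₁) (k ∙ v₂)) (hv₁ : v₁ ≠ 0) (hv₂ : v₂ ≠ 0) {u : GL n k}
    (h₁ : (u : Matrix n n k) *ᵥ v₁ ∈ k ∙ v₂) (h₂ : (u : Matrix n n k) *ᵥ v₂ ∈ k ∙ v₁) :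
    HasDistinctEigenvalues (u : Matrix n n k) := by
  obtain ⟨c, hc0, hu⟩ := exists_mul_self_eq_smul_one_of_swaps hc hv₁ hv₂ h₁ h₂
  obtain ⟨r, rfl⟩ := IsAlgClosed.exists_eq_mul_self c
  have hr : r ≠ -r := fun h => hc0 <| by
    have : (2 : k) * r = 0 := by linear_combination h
    rw [(mul_eq_zero.mp this).resolve_left h2, mul_zero]
  have hv : ∀ s : k, (u : Matrix n n k) *ᵥ v₁ + s • v₁ ≠ 0 := fun s h =>
    mulVec_ne_zero u hv₁ <| disjoint_def.mp hc.disjoint _ (by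
      rw [eq_neg_of_add_eq_zero_left h]
      exact neg_mem (smul_mem _ _ (mem_span_singleton_self _))) h₁
  exact ⟨r, -r, hr, hasEigenvalue_of_mul_self_eq_smul_one hu (hv r),
    hasEigenvalue_of_mul_self_eq_smul_one (by rwa [neg_mul_neg]) (hv (-r))⟩

end Lines

section Monomial

variable {k : Type*} [Field k] {G : Type*} [Group G] {ρ : G →* GL (Fin 2) k} {H : Subgroup G}
  {v₁ v₂ : Fin 2 → k}

theorem exists_mem_swaps (hc : IsCompl (k ∙ v₁) (k ∙ v₂)) (hv₁ : v₁ ≠ 0) (hv₂ : v₂ ≠ 0)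
    (hperm : ∀ g, PermutesLines (k ∙ v₁) (k ∙ v₂) (ρ g : Matrix (Fin 2) (Fin 2) k))
    (hH : ∀ W : Submodule k (Fin 2 → k),
      (∀ g ∈ H, ∀ x ∈ W, (ρ g : Matrix (Fin 2) (Fin 2) k) *ᵥ x ∈ W) → W = ⊥ ∨ W = ⊤) :
    ∃ τ ∈ H, (ρ τ : Matrix (Fin 2) (Fin 2) k) *ᵥ v₁ ∈ k ∙ v₂ ∧
      (ρ τ : Matrix (Fin 2) (Fin 2) k) *ᵥ v₂ ∈ k ∙ v₁ := by
  by_contra! hτ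
  have hstable : ∀ g ∈ H, ∀ x ∈ k ∙ v₁, (ρ g : Matrix (Fin 2) (Fin 2) k) *ᵥ x ∈ k ∙ v₁ := by
    intro g hg x hx
    rcases hperm g with ⟨h₁, -⟩ | ⟨h₁, h₂⟩
    · exact mulVec_mem_of_map_eq h₁ hx
    · exact absurd (mulVec_mem_of_map_eq h₂ (mem_span_singleton_self v₂))
        (hτ g hg (mulVec_mem_of_map_eq h₁ (mem_span_singleton_self v₁)))
  rcases hH _ hstable with h | h
  · exact hv₁ (span_singleton_eq_bot.mp h)
  · exact hv₂ (span_singleton_eq_bot.mp (eq_bot_of_top_isCompl (h ▸ hc)))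

theorem exists_mem_mulVec_eq_smul_ne [IsAlgClosed k] (hc : IsCompl (k ∙ v₁) (k ∙ v₂))
    (hperm : ∀ g, PermutesLines (k ∙ v₁) (k ∙ v₂) (ρ g : Matrix (Fin 2) (Fin 2) k))
    (hH : ∀ W : Submodule k (Fin 2 → k),
      (∀ g ∈ H, ∀ x ∈ W, (ρ g : Matrix (Fin 2) (Fin 2) k) *ᵥ x ∈ W) → W = ⊥ ∨ W = ⊤)
    {τ : G} (hτH : τ ∈ H) (hτ₁ : (ρ τ : Matrix (Fin 2) (Fin 2) k) *ᵥ v₁ ∈ k ∙ v₂)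
    (hτ₂ : (ρ τ : Matrix (Fin 2) (Fin 2) k) *ᵥ v₂ ∈ k ∙ v₁) :
    ∃ δ ∈ H, ∃ a b : k, a ≠ b ∧ (ρ δ : Matrix (Fin 2) (Fin 2) k) *ᵥ v₁ = a • v₁ ∧
      (ρ δ : Matrix (Fin 2) (Fin 2) k) *ᵥ v₂ = b • v₂ := by
  by_contra! hδ
  have scalar : ∀ g ∈ H, (ρ g : Matrix (Fin 2) (Fin 2) k) *ᵥ v₁ ∈ k ∙ v₁ →
      (ρ g : Matrix (Fin 2) (Fin 2) k) *ᵥ v₂ ∈ k ∙ v₂ →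
      ∃ c : k, (ρ g : Matrix (Fin 2) (Fin 2) k) = c • 1 := by
    intro g hg h₁ h₂
    obtain ⟨a, ha⟩ := mem_span_singleton.mp h₁
    obtain ⟨b, hb⟩ := mem_span_singleton.mp h₂
    obtain rfl : a = b := by_contra fun hab => hδ g hg a b hab ha.symm hb.symm
    exact ⟨a, eq_of_mulVec_eq_of_isCompl hc (by rw [smul_mulVec, one_mulVec, ha])
      (by rw [smul_mulVec, one_mulVec, hb])⟩
  -- every element of `H` is a multiple of `1` or of `ρ τ⁻¹`, so an eigenline of `ρ τ⁻¹` is stable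
  obtain ⟨μ, hμ⟩ := End.exists_eigenvalue (toLin' (ρ τ⁻¹ : Matrix (Fin 2) (Fin 2) k))
  obtain ⟨w, hw, hw0⟩ := hμ.exists_hasEigenvector
  rw [End.mem_eigenspace_iff, toLin'_apply] at hw
  have hstable : ∀ g ∈ H, ∀ x ∈ k ∙ w, (ρ g : Matrix (Fin 2) (Fin 2) k) *ᵥ x ∈ k ∙ w := by
    intro g hg x hx
    refine mulVec_mem_of_mem_span_singleton hx ?_
    rcases hperm g with ⟨h₁, h₂⟩ | ⟨h₁, h₂⟩
    · obtain ⟨c, hgc⟩ := scalar g hg (mulVec_mem_of_map_eq h₁ (mem_span_singleton_self _))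
        (mulVec_mem_of_map_eq h₂ (mem_span_singleton_self _))
      rw [hgc, smul_mulVec, one_mulVec]
      exact smul_mem _ _ (mem_span_singleton_self w)
    · have hgτ : ∀ {v v' : Fin 2 → k}, (ρ τ : Matrix (Fin 2) (Fin 2) k) *ᵥ v ∈ k ∙ v' →
          (k ∙ v').map (ρ g : Matrix (Fin 2) (Fin 2) k).mulVecLin = k ∙ v →
          (ρ (g * τ) : Matrix (Fin 2) (Fin 2) k) *ᵥ v ∈ k ∙ v := fun hτv hgv => by
        rw [map_mul, Units.val_mul, ← mulVec_mulVec]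
        exact mulVec_mem_of_mem_span_singleton hτv
          (mulVec_mem_of_map_eq hgv (mem_span_singleton_self _))
      obtain ⟨c, hgc⟩ := scalar (g * τ) (H.mul_mem hg hτH) (hgτ hτ₁ h₂) (hgτ hτ₂ h₁)
      have : (ρ g : Matrix (Fin 2) (Fin 2) k) = c • (ρ τ⁻¹ : Matrix (Fin 2) (Fin 2) k) := by
        rw [← one_mul (ρ τ⁻¹ : Matrix (Fin 2) (Fin 2) k), ← smul_mul_assoc, ← hgc, ← Units.val_mul,
          ← map_mul, mul_inv_cancel_right]
      rw [this, smul_mulVec, hw]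
      exact smul_mem _ _ (smul_mem _ _ (mem_span_singleton_self w))
  rcases hH _ hstable with h | h
  · exact hw0 (span_singleton_eq_bot.mp h)
  · have := finrank_span_singleton (K := k) hw0
    rw [h, finrank_top, finrank_fin_fun] at this
    omega

theorem exists_mem_hasDistinctEigenvalues_commute [IsAlgClosed k] (h2 : (2 : k) ≠ 0)
    (hc : IsCompl (k ∙ v₁) (k ∙ v₂)) (hv₁ : v₁ ≠ 0) (hv₂ : v₂ ≠ 0)
    (hperm : ∀ g, PermutesLines (k ∙ v₁) (k ∙ v₂) (ρ g : Matrix (Fin 2) (Fin 2) k))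
    (hH : ∀ W : Submodule k (Fin 2 → k),
      (∀ g ∈ H, ∀ x ∈ W, (ρ g : Matrix (Fin 2) (Fin 2) k) *ᵥ x ∈ W) → W = ⊥ ∨ W = ⊤)
    {N : Submodule k (Matrix (Fin 2) (Fin 2) k)}
    (hNstab : ∀ g : G, ∀ A ∈ N,
      (ρ g : Matrix (Fin 2) (Fin 2) k) * A * ((ρ g)⁻¹ : Matrix (Fin 2) (Fin 2) k) ∈ N)
    (hNne : N ≠ ⊥)
    (hNirr : ∀ N' : Submodule k (Matrix (Fin 2) (Fin 2) k), N' ≤ N →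
      (∀ g : G, ∀ A ∈ N',
        (ρ g : Matrix (Fin 2) (Fin 2) k) * A * ((ρ g)⁻¹ : Matrix (Fin 2) (Fin 2) k) ∈ N') →
      N' = ⊥ ∨ N' = N) :
    ∃ σ ∈ H, HasDistinctEigenvalues (ρ σ : Matrix (Fin 2) (Fin 2) k) ∧
      ∃ A ∈ N, A ≠ 0 ∧ Commute (ρ σ : Matrix (Fin 2) (Fin 2) k) A := by
  obtain ⟨τ, hτH, hτ₁, hτ₂⟩ := exists_mem_swaps hc hv₁ hv₂ hperm hH
  obtain ⟨δ, hδH, a, b, hab, hδ₁, hδ₂⟩ := exists_mem_mulVec_eq_smul_ne hc hperm hH hτH hτ₁ hτ₂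
  obtain ⟨A, hAN, hA0⟩ := N.ne_bot_iff.mp hNne
  rcases hNirr (N ⊓ swapSubmodule (k ∙ v₁) (k ∙ v₂)) inf_le_left
    (fun g B hB => ⟨hNstab g B hB.1, conj_mem_swapSubmodule (hperm g) hB.2⟩) with hbot | htop
  · -- conjugation by `ρ δ` moves `A` only by an element of `N ⊓ swapSubmodule = ⊥`
    refine ⟨δ, hδH, ⟨a, b, hab, hasEigenvalue_toLin'_of_mulVec_eq hv₁ hδ₁,
      hasEigenvalue_toLin'_of_mulVec_eq hv₂ hδ₂⟩, A, hAN, hA0, ?_⟩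
    have hmem : (ρ δ : Matrix (Fin 2) (Fin 2) k) * A * ((ρ δ)⁻¹ : Matrix (Fin 2) (Fin 2) k) - A ∈
        N ⊓ swapSubmodule (k ∙ v₁) (k ∙ v₂) :=
      ⟨N.sub_mem (hNstab δ A hAN) hAN, conj_sub_mem_swapSubmodule hc hv₁ hv₂ hδ₁ hδ₂ A⟩
    rwa [hbot, mem_bot, sub_eq_zero, ← coe_units_inv, Units.mul_inv_eq_iff_eq_mul] at hmem
  · -- for `σ` exchanging the lines, `σ²` is scalar, so `σ` commutes with `A + σ A σ⁻¹`
    have hAswap : A ∈ swapSubmodule (k ∙ v₁) (k ∙ v₂) := (htop ▸ inf_le_right : N ≤ _) hAN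
    obtain ⟨σ, hσH, hσ₁, hσ₂, hσA⟩ : ∃ σ ∈ H, (ρ σ : Matrix (Fin 2) (Fin 2) k) *ᵥ v₁ ∈ k ∙ v₂ ∧
        (ρ σ : Matrix (Fin 2) (Fin 2) k) *ᵥ v₂ ∈ k ∙ v₁ ∧
        A + ρ σ * A * ((ρ σ)⁻¹ : Matrix (Fin 2) (Fin 2) k) ≠ 0 := by
      rcases add_conj_ne_zero_or_add_conj_ne_zero hc hab hδ₁ hδ₂ hAswap hA0 (ρ τ) with h | h
      · exact ⟨τ, hτH, hτ₁, hτ₂, h⟩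
      · refine ⟨δ * τ, H.mul_mem hδH hτH, ?_, ?_, by rwa [map_mul]⟩ <;>
          rw [map_mul, Units.val_mul, ← mulVec_mulVec]
        · exact mulVec_mem_of_mem_span_singleton hτ₁
            (by rw [hδ₂]; exact smul_mem _ _ (mem_span_singleton_self _))
        · exact mulVec_mem_of_mem_span_singleton hτ₂
            (by rw [hδ₁]; exact smul_mem _ _ (mem_span_singleton_self _))
    obtain ⟨c, -, hσσ⟩ := exists_mul_self_eq_smul_one_of_swaps hc hv₁ hv₂ hσ₁ hσ₂
    exact ⟨σ, hσH, hasDistinctEigenvalues_of_swaps h2 hc hv₁ hv₂ hσ₁ hσ₂, _,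
      N.add_mem hAN (hNstab σ A hAN), hσA, commute_add_conj_of_mul_self_eq_smul_one _ hσσ A⟩

end Monomial

theorem exists_regular_semisimple_fixing_line_of_monomial_general
    (ℓ : ℕ) (hℓ : ℓ.Prime) (hℓ3 : 3 ≤ ℓ)
    (k : Type) [Field k] [IsAlgClosed k] [CharP k ℓ]
    (G : Type) [Group G] [Finite G]
    (ρ : G →* Matrix.GeneralLinearGroup (Fin 2) k)
    -- `ρ` is monomial
    (L₁ L₂ : Submodule k (Fin 2 → k))
    (hL₁ : Module.finrank k L₁ = 1) (hL₂ : Module.finrank k L₂ = 1)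
    (hcompl : IsCompl L₁ L₂)
    (hperm : ∀ g : G,
      (L₁.map (Matrix.mulVecLin (ρ g : Matrix (Fin 2) (Fin 2) k)) = L₁ ∧
        L₂.map (Matrix.mulVecLin (ρ g : Matrix (Fin 2) (Fin 2) k)) = L₂) ∨
      (L₁.map (Matrix.mulVecLin (ρ g : Matrix (Fin 2) (Fin 2) k)) = L₂ ∧
        L₂.map (Matrix.mulVecLin (ρ g : Matrix (Fin 2) (Fin 2) k)) = L₁))
    -- `ρ|_H` is irreducible
    (H : Subgroup G)
    (hH : ∀ W : Submodule k (Fin 2 → k),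
      (∀ g ∈ H, ∀ x ∈ W, (ρ g : Matrix (Fin 2) (Fin 2) k).mulVec x ∈ W) → W = ⊥ ∨ W = ⊤)
    -- a nonzero irreducible subrepresentation `N` of `ad⁰ρ`
    (N : Submodule k (Matrix (Fin 2) (Fin 2) k))
    (hNstab : ∀ g : G, ∀ A ∈ N,
      (ρ g : Matrix (Fin 2) (Fin 2) k) * A * ((ρ g)⁻¹ : Matrix (Fin 2) (Fin 2) k) ∈ N)
    (hNne : N ≠ ⊥)
    (hNirr : ∀ N' : Submodule k (Matrix (Fin 2) (Fin 2) k), N' ≤ N →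
      (∀ g : G, ∀ A ∈ N',
        (ρ g : Matrix (Fin 2) (Fin 2) k) * A * ((ρ g)⁻¹ : Matrix (Fin 2) (Fin 2) k) ∈ N') →
      N' = ⊥ ∨ N' = N) :
    ∃ σ ∈ H, (orderOf σ).Coprime ℓ ∧
      IsRegularSemisimple (ρ σ : Matrix (Fin 2) (Fin 2) k) ∧
      ∃ A ∈ N, A ≠ 0 ∧
        (ρ σ : Matrix (Fin 2) (Fin 2) k) * A = A * (ρ σ : Matrix (Fin 2) (Fin 2) k) := by
  have h2 : (2 : k) ≠ 0 := Ring.two_ne_zero (by rw [ringChar.eq k ℓ]; omega)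
  have : Fact ℓ.Prime := ⟨hℓ⟩
  obtain ⟨v₁, hv₁, rfl⟩ := exists_ne_zero_eq_span_singleton hL₁
  obtain ⟨v₂, hv₂, rfl⟩ := exists_ne_zero_eq_span_singleton hL₂
  obtain ⟨σ, hσH, hσ, A, hAN, hA0, hσA⟩ :=
    exists_mem_hasDistinctEigenvalues_commute h2 hcompl hv₁ hv₂ hperm hH hNstab hNne hNirr
  -- pass to the `ℓ`-regular part of `σ`, a power of `σ` with exponent a power of `ℓ`
  refine ⟨σ ^ ℓ ^ (orderOf σ).factorization ℓ, H.pow_mem hσH _, coprime_orderOf_pow_ordProj hℓ σ,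
    ?_, A, hAN, hA0, ?_⟩ <;> rw [map_pow, Units.val_pow_eq_pow_val]
  · exact (hσ.pow_expChar_pow _).isRegularSemisimple
  · exact (hσA.pow_left _).eq

/-- Let `ℓ ≥ 3` be a prime, `k` an algebraically closed field of
characteristic `ℓ`, `G` a finite group and `ρ : G → GL₂(k)` a monomial representation
(there are one-dimensional subspaces `L₁, L₂` with `k² = L₁ ⊕ L₂` permuted by every
`ρ(g)`).  Let `H ≤ G` be a subgroup such that `ρ|_H` is irreducible. Then for every
nonzero irreducible `G`-subrepresentation `N` of `ad⁰ρ` (trace-zero matrices with the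
conjugation action) there is `σ ∈ H` of order prime to `ℓ` such that `ρ(σ)` is regular
semisimple and the `σ`-fixed subspace of `N` is nonzero. -/
theorem exists_regular_semisimple_fixing_line_of_monomial
    (ℓ : ℕ) (hℓ : ℓ.Prime) (hℓ3 : 3 ≤ ℓ)
    (k : Type) [Field k] [IsAlgClosed k] [CharP k ℓ]
    (G : Type) [Group G] [Finite G]
    (ρ : G →* Matrix.GeneralLinearGroup (Fin 2) k)
    -- `ρ` is monomial
    (L₁ L₂ : Submodule k (Fin 2 → k))
    (hL₁ : Module.finrank k L₁ = 1) (hL₂ : Module.finrank k L₂ = 1)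
    (hcompl : IsCompl L₁ L₂)
    (hperm : ∀ g : G,
      (L₁.map (Matrix.mulVecLin (ρ g : Matrix (Fin 2) (Fin 2) k)) = L₁ ∧
        L₂.map (Matrix.mulVecLin (ρ g : Matrix (Fin 2) (Fin 2) k)) = L₂) ∨
      (L₁.map (Matrix.mulVecLin (ρ g : Matrix (Fin 2) (Fin 2) k)) = L₂ ∧
        L₂.map (Matrix.mulVecLin (ρ g : Matrix (Fin 2) (Fin 2) k)) = L₁))
    -- `ρ|_H` is irreducible
    (H : Subgroup G)
    (hH : ∀ W : Submodule k (Fin 2 → k),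
      (∀ g ∈ H, ∀ x ∈ W, (ρ g : Matrix (Fin 2) (Fin 2) k).mulVec x ∈ W) → W = ⊥ ∨ W = ⊤)
    -- a nonzero irreducible subrepresentation `N` of `ad⁰ρ`
    (N : Submodule k (Matrix (Fin 2) (Fin 2) k))
    (hNtr : N ≤ LinearMap.ker (Matrix.traceLinearMap (Fin 2) k k))
    (hNstab : ∀ g : G, ∀ A ∈ N,
      (ρ g : Matrix (Fin 2) (Fin 2) k) * A * ((ρ g)⁻¹ : Matrix (Fin 2) (Fin 2) k) ∈ N)
    (hNne : N ≠ ⊥)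
    (hNirr : ∀ N' : Submodule k (Matrix (Fin 2) (Fin 2) k), N' ≤ N →
      (∀ g : G, ∀ A ∈ N',
        (ρ g : Matrix (Fin 2) (Fin 2) k) * A * ((ρ g)⁻¹ : Matrix (Fin 2) (Fin 2) k) ∈ N') →
      N' = ⊥ ∨ N' = N) :
    ∃ σ ∈ H, (orderOf σ).Coprime ℓ ∧
      IsRegularSemisimple (ρ σ : Matrix (Fin 2) (Fin 2) k) ∧
      ∃ A ∈ N, A ≠ 0 ∧
        (ρ σ : Matrix (Fin 2) (Fin 2) k) * A = A * (ρ σ : Matrix (Fin 2) (Fin 2) k) :=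
  exists_regular_semisimple_fixing_line_of_monomial_general ℓ hℓ hℓ3 k G ρ L₁ L₂ hL₁ hL₂ hcompl
    hperm H hH N hNstab hNne hNirr
end

section
/- Let ℓ ≥ 3 be a prime, k an algebraically closed field of characteristic ℓ, G a finite group, ρ : G → GL₂(k) a group homomorphism, and H a normal subgroup of G whose index [G:H] is a power of ℓ. Then the representation of G on k² given by ρ is irreducible if and only if its restriction to H is irreducible. -/
open Module MulAction Projectivization
open scoped LinearAlgebra.Projectivization

section LinearAlgebra

variable {K V : Type*} [Field K] [AddCommGroup V] [Module K V]

theorem LinearMap.exists_eq_smul_id_of_three_eigenvectors (hV : finrank K V = 2)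
    {f : V →ₗ[K] V} {v₁ v₂ v₃ : V} {c₁ c₂ c₃ : K}
    (h₁₂ : LinearIndependent K ![v₁, v₂]) (h₁₃ : LinearIndependent K ![v₁, v₃])
    (h₂₃ : LinearIndependent K ![v₂, v₃])
    (hf₁ : f v₁ = c₁ • v₁) (hf₂ : f v₂ = c₂ • v₂) (hf₃ : f v₃ = c₃ • v₃) :
    ∃ c : K, f = c • 1 := by
  have hspan : Submodule.span K {v₁, v₂} = ⊤ := by
    rw [← Matrix.range_cons_cons_empty v₁ v₂ ![]]
    exact h₁₂.span_eq_top_of_card_eq_finrank (by simp [hV])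
  obtain ⟨s, t, hst⟩ := Submodule.mem_span_pair.1 (hspan ▸ Submodule.mem_top : v₃ ∈ _)
  have hs : s ≠ 0 := by
    rintro rfl
    have := LinearIndependent.pair_iff.1 h₂₃ t (-1) (by rw [← hst]; module)
    simp at this
  have ht : t ≠ 0 := by
    rintro rfl
    have := LinearIndependent.pair_iff.1 h₁₃ s (-1) (by rw [← hst]; module)
    simp at this
  obtain ⟨hc₁, hc₂⟩ := LinearIndependent.pair_iff.1 h₁₂ (s * (c₁ - c₃)) (t * (c₂ - c₃)) <| by
    have := congrArg f hst
    rw [map_add, map_smul, map_smul, hf₁, hf₂, hf₃, ← hst] at this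
    linear_combination (norm := module) this
  refine ⟨c₃, LinearMap.ext_on hspan ?_⟩
  rintro v (rfl | rfl)
  · simp [hf₁, sub_eq_zero.1 ((mul_eq_zero.1 hc₁).resolve_left hs)]
  · simp [hf₂, sub_eq_zero.1 ((mul_eq_zero.1 hc₂).resolve_left ht)]

theorem Projectivization.exists_submodule_eq_iff (hV : finrank K V = 2) {W : Submodule K V} :
    (∃ p : ℙ K V, p.submodule = W) ↔ W ≠ ⊥ ∧ W ≠ ⊤ := by
  have := Module.finite_of_finrank_eq_succ hV
  constructor
  · rintro ⟨p, rfl⟩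
    have h := p.finrank_submodule
    constructor <;> intro h0 <;> rw [h0] at h <;> simp [hV] at h
  · rintro ⟨hbot, htop⟩
    have h0 : finrank K W ≠ 0 := fun h => hbot (Submodule.finrank_eq_zero.1 h)
    have h2 : finrank K W ≠ 2 := fun h => htop (Submodule.eq_top_of_finrank_eq (h.trans hV.symm))
    have := W.finrank_le
    exact ⟨mk'' W (by omega), submodule_mk'' _ _⟩

end LinearAlgebra

theorem MulAction.smul_eq_self_of_mem_orbit {G X : Type*} [Group G] [MulAction G X] {a : G}
    {x z : X} (hconj : ∀ y : G, y⁻¹ * a * y ∈ stabilizer G x) (hz : z ∈ orbit G x) :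
    a • z = z := by
  obtain ⟨y, rfl⟩ := hz
  have := hconj y
  rwa [mem_stabilizer_iff, mul_smul, mul_smul, inv_smul_eq_iff] at this

theorem Subgroup.exists_notMem_mk_mem_center {G : Type*} [Group G] {p : ℕ} [Fact p.Prime]
    {N : Subgroup G} [N.Normal] [Finite (G ⧸ N)] (hp : IsPGroup p (G ⧸ N)) (hN : N ≠ ⊤) :
    ∃ g ∉ N, (g : G ⧸ N) ∈ Subgroup.center (G ⧸ N) := by
  have := QuotientGroup.nontrivial_iff.2 hN
  have := hp.center_nontrivial
  obtain ⟨⟨z, hz⟩, hz1⟩ := exists_ne (1 : Subgroup.center (G ⧸ N))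
  obtain ⟨g, rfl⟩ := QuotientGroup.mk_surjective z
  exact ⟨g, fun hg => hz1 (Subtype.ext ((QuotientGroup.eq_one_iff g).2 hg)), hz⟩

section Action

variable {K V G : Type*} [Field K] [AddCommGroup V] [Module K V] [Group G]
  [DistribMulAction G V] [SMulCommClass G K V]

theorem Projectivization.smul_eq_self_iff {g : G} {p : ℙ K V} :
    g • p = p ↔ ∀ x ∈ p.submodule, g • x ∈ p.submodule := by
  induction p with | h v hv =>
  rw [smul_mk, mk_eq_mk_iff', submodule_mk]
  constructor
  · rintro ⟨c, hc⟩ x hx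
    obtain ⟨b, rfl⟩ := Submodule.mem_span_singleton.1 hx
    rw [smul_comm, ← hc, smul_smul]
    exact Submodule.smul_mem _ _ (Submodule.mem_span_singleton_self v)
  · intro h
    exact Submodule.mem_span_singleton.1 (h v (Submodule.mem_span_singleton_self v))

theorem Projectivization.smul_eq_self_of_three_fixed_points (hV : finrank K V = 2) {a : G}
    {p₁ p₂ p₃ : ℙ K V} (h₁₂ : p₁ ≠ p₂) (h₁₃ : p₁ ≠ p₃) (h₂₃ : p₂ ≠ p₃)
    (ha₁ : a • p₁ = p₁) (ha₂ : a • p₂ = p₂) (ha₃ : a • p₃ = p₃) (q : ℙ K V) : a • q = q := by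
  have eigen : ∀ p : ℙ K V, a • p = p →
      ∃ c : K, DistribSMul.toLinearMap K V a p.rep = c • p.rep := fun p hp => by
    rw [← mk_rep p, smul_mk, mk_eq_mk_iff'] at hp
    obtain ⟨c, hc⟩ := hp
    exact ⟨c, hc.symm⟩
  obtain ⟨c₁, hc₁⟩ := eigen p₁ ha₁
  obtain ⟨c₂, hc₂⟩ := eigen p₂ ha₂
  obtain ⟨c₃, hc₃⟩ := eigen p₃ ha₃
  obtain ⟨c, hc⟩ := LinearMap.exists_eq_smul_id_of_three_eigenvectors hV
    (linearIndependent_pair_iff_ne.2 h₁₂) (linearIndependent_pair_iff_ne.2 h₁₃)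
    (linearIndependent_pair_iff_ne.2 h₂₃) hc₁ hc₂ hc₃
  induction q with | h v hv =>
  rw [smul_mk, mk_eq_mk_iff']
  exact ⟨c, by simpa using (LinearMap.congr_fun hc v).symm⟩

theorem index_stabilizer_le_two (hV : finrank K V = 2) {a : G} {p : ℙ K V}
    (ha : ∃ q : ℙ K V, a • q ≠ q) (hconj : ∀ y : G, y⁻¹ * a * y ∈ stabilizer G p) :
    (stabilizer G p).index ≤ 2 := by
  by_contra! h
  rw [index_stabilizer] at h
  obtain ⟨p₁, p₂, p₃, h₁, h₂, h₃, h₁₂, h₁₃, h₂₃⟩ :=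
    (Set.two_lt_ncard_iff (Set.finite_of_ncard_pos (by omega))).1 h
  obtain ⟨q, hq⟩ := ha
  exact hq (smul_eq_self_of_three_fixed_points hV h₁₂ h₁₃ h₂₃ (smul_eq_self_of_mem_orbit hconj h₁)
    (smul_eq_self_of_mem_orbit hconj h₂) (smul_eq_self_of_mem_orbit hconj h₃) q)

theorem stabilizer_eq_top_of_conj_mem (hV : finrank K V = 2) {H : Subgroup G}
    (hodd : Odd H.index) {p : ℙ K V} (hp : H ≤ stabilizer G p) {a : G}
    (ha : ∃ q : ℙ K V, a • q ≠ q) (hconj : ∀ y : G, y⁻¹ * a * y ∈ stabilizer G p) :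
    stabilizer G p = ⊤ := by
  obtain ⟨j, hj⟩ := hodd.of_dvd_nat (Subgroup.index_dvd_of_le hp)
  have := index_stabilizer_le_two hV ha hconj
  rw [← Subgroup.index_eq_one]
  omega

theorem exists_smul_eq_self [IsAlgClosed K] [FiniteDimensional K V] [Nontrivial V] (a : G) :
    ∃ p : ℙ K V, a • p = p := by
  obtain ⟨c, hc⟩ := Module.End.exists_eigenvalue (DistribSMul.toLinearMap K V a)
  obtain ⟨v, hv⟩ := hc.exists_hasEigenvector
  refine ⟨mk K v hv.2, ?_⟩
  rw [smul_mk, mk_eq_mk_iff']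
  exact ⟨c, hv.apply_eq_smul.symm⟩

theorem exists_fixed_point_of_le_ker [IsAlgClosed K] (hV : finrank K V = 2) {ℓ m : ℕ}
    (hℓ : ℓ.Prime) (hℓ2 : ℓ ≠ 2) {H : Subgroup G} (hidx : H.index = ℓ ^ m)
    (hH : H ≤ (toPermHom G (ℙ K V)).ker) : ∃ q : ℙ K V, ∀ g : G, g • q = q := by
  set N := (toPermHom G (ℙ K V)).ker
  have hmem : ∀ g, g ∈ N ↔ ∀ q : ℙ K V, g • q = q := by
    simp [N, MonoidHom.mem_ker, Equiv.Perm.ext_iff]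
  have := Module.finite_of_finrank_eq_succ hV
  have := Module.nontrivial_of_finrank_eq_succ hV
  by_cases hN : N = ⊤
  · obtain ⟨v, hv⟩ := exists_ne (0 : V)
    exact ⟨mk K v hv, fun g => (hmem g).1 (hN ▸ Subgroup.mem_top g) _⟩
  have hdvd : N.index ∣ ℓ ^ m := hidx ▸ Subgroup.index_dvd_of_le hH
  obtain ⟨j, -, hj⟩ := (Nat.dvd_prime_pow hℓ).1 hdvd
  rw [Subgroup.index_eq_card] at hj
  have : Fact ℓ.Prime := ⟨hℓ⟩
  have : Finite (G ⧸ N) := Nat.finite_of_card_ne_zero (by rw [hj]; exact pow_ne_zero _ hℓ.ne_zero)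
  obtain ⟨g, hgN, hgZ⟩ := Subgroup.exists_notMem_mk_mem_center (IsPGroup.of_card hj) hN
  obtain ⟨q, hq⟩ := exists_smul_eq_self (K := K) (V := V) g
  have hNq : N ≤ stabilizer G q := fun x hx => (hmem x).1 hx q
  have hconj : ∀ y : G, y⁻¹ * g * y ∈ stabilizer G q := fun y => by
    have hcomm : g⁻¹ * (y⁻¹ * g * y) ∈ N := by
      rw [← QuotientGroup.eq, QuotientGroup.mk_mul, QuotientGroup.mk_mul, QuotientGroup.mk_inv,
        mul_assoc, ← Subgroup.mem_center_iff.1 hgZ, inv_mul_cancel_left]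
    rw [show y⁻¹ * g * y = g * (g⁻¹ * (y⁻¹ * g * y)) by group]
    exact mul_mem hq (hNq hcomm)
  have hodd : Odd N.index := ((hℓ.odd_of_ne_two hℓ2).pow).of_dvd_nat hdvd
  have hgq : ∃ q : ℙ K V, g • q ≠ q := by simpa [hmem] using hgN
  refine ⟨q, fun y => ?_⟩
  rw [← mem_stabilizer_iff, stabilizer_eq_top_of_conj_mem hV hodd hNq hgq hconj]
  trivial

theorem exists_fixed_point_of_le_stabilizer [IsAlgClosed K] (hV : finrank K V = 2)
    {ℓ m : ℕ} (hℓ : ℓ.Prime) (hℓ2 : ℓ ≠ 2) {H : Subgroup G} [hH : H.Normal]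
    (hidx : H.index = ℓ ^ m) {p : ℙ K V} (hp : H ≤ stabilizer G p) :
    ∃ q : ℙ K V, ∀ g : G, g • q = q := by
  by_cases hHN : H ≤ (toPermHom G (ℙ K V)).ker
  · exact exists_fixed_point_of_le_ker hV hℓ hℓ2 hidx hHN
  obtain ⟨h, hhH, hh⟩ := Set.not_subset.1 hHN
  have hodd : Odd H.index := hidx ▸ (hℓ.odd_of_ne_two hℓ2).pow
  have hmoves : ∃ q : ℙ K V, h • q ≠ q := by
    simpa [MonoidHom.mem_ker, Equiv.Perm.ext_iff] using hh
  have hconj : ∀ y : G, y⁻¹ * h * y ∈ stabilizer G p := fun y =>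
    hp (by simpa using hH.conj_mem h hhH y⁻¹)
  refine ⟨p, fun g => ?_⟩
  rw [← mem_stabilizer_iff, stabilizer_eq_top_of_conj_mem hV hodd hp hmoves hconj]
  trivial

end Action

theorem irreducible_iff_restriction_irreducible_of_prime_power_index_general
    (ℓ : ℕ) (hℓ : ℓ.Prime) (hℓ3 : 3 ≤ ℓ)
    (k : Type) [Field k] [IsAlgClosed k]
    (G : Type) [Group G]
    (ρ : G →* Matrix.GeneralLinearGroup (Fin 2) k)
    (H : Subgroup G) (hH : H.Normal) (m : ℕ) (hidx : H.index = ℓ ^ m) :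
    MatIrred ρ ↔
      ∀ W : Submodule k (Fin 2 → k),
        (∀ g ∈ H, ∀ x ∈ W, (ρ g : Matrix (Fin 2) (Fin 2) k).mulVec x ∈ W) →
        W = ⊥ ∨ W = ⊤ := by
  -- `G` acts on `k²` through `ρ`; `g • x` unfolds to `(ρ g).mulVec x`.
  let : DistribMulAction G (Fin 2 → k) := DistribMulAction.compHom _ ρ
  have : SMulCommClass G k (Fin 2 → k) := ⟨fun g => smul_comm (ρ g)⟩
  have hV : finrank k (Fin 2 → k) = 2 := Module.finrank_fin_fun k
  refine ⟨fun hirr W hW => ?_, fun hres W hW => hres W fun g _ => hW g⟩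
  by_contra hW'
  obtain ⟨p, rfl⟩ := (exists_submodule_eq_iff hV).2 (not_or.1 hW')
  obtain ⟨q, hq⟩ := exists_fixed_point_of_le_stabilizer hV hℓ (by omega) (hH := hH) hidx
    fun h hh => smul_eq_self_iff.2 (hW h hh)
  obtain ⟨hbot, htop⟩ := (exists_submodule_eq_iff hV).1 ⟨q, rfl⟩
  exact (hirr _ fun g => smul_eq_self_iff.1 (hq g)).elim hbot htop

/-- Let `ℓ ≥ 3` be a prime, `k` an algebraically closed field of
characteristic `ℓ`, `G` a finite group, `ρ : G → GL₂(k)` and `H` a normal subgroup of `G`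
of `ℓ`-power index.  Then `ρ` is irreducible iff its restriction to `H` is. -/
theorem irreducible_iff_restriction_irreducible_of_prime_power_index
    (ℓ : ℕ) (hℓ : ℓ.Prime) (hℓ3 : 3 ≤ ℓ)
    (k : Type) [Field k] [IsAlgClosed k] [CharP k ℓ]
    (G : Type) [Group G] [Finite G]
    (ρ : G →* Matrix.GeneralLinearGroup (Fin 2) k)
    (H : Subgroup G) (hH : H.Normal) (m : ℕ) (hidx : H.index = ℓ ^ m) :
    MatIrred ρ ↔
      ∀ W : Submodule k (Fin 2 → k),
        (∀ g ∈ H, ∀ x ∈ W, (ρ g : Matrix (Fin 2) (Fin 2) k).mulVec x ∈ W) →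
        W = ⊥ ∨ W = ⊤ :=
  irreducible_iff_restriction_irreducible_of_prime_power_index_general ℓ hℓ hℓ3 k G ρ H hH m hidx
end

section
/- Let G be a group and c ∈ G an element with c² = 1. Let R be a commutative local ring with maximal ideal m and residue field k = R/m, in which 2 is invertible. Let ρ, ρ' : G → GL₂(R) be two group homomorphisms such that: the residual representations ρ̄, ρ̄' : G → GL₂(k), obtained by reducing matrix entries modulo m, are both irreducible on k² (no nonzero proper subspace of k² is stable); and det ρ(c) = det ρ'(c) = −1. If trace ρ(g) = trace ρ'(g) for all g ∈ G, then ρ and ρ' are isomorphic: there exists P ∈ GL₂(R) with ρ'(g) = P ρ(g) P⁻¹ for all g ∈ G. -/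
/-!
An involution of determinant `-1` has trace `0`, so it is `!![a, b; c, -a]` with `a² + bc = 1`.
One of `1 ± a` is a unit, because their sum `2` is, and this yields eigenvectors for `1` and `-1`
forming a basis; so after conjugation `ρ(c) = ρ'(c) = diag(1, -1)`. The traces of `ρ(g)` and
`ρ(gc)` then determine the diagonal of `ρ(g)`, and the traces of `ρ(gh)` and `ρ(ghc)` determine the
products `b(g) c(h)` of off-diagonal entries. Irreducibility of the residual representation makes
some `b(g₀)` and some `c(h₀)` units, and conjugation by `diag(s, 1)` with `s = b'(g₀) / b(g₀)`
carries `ρ` to `ρ'`.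
-/

open IsLocalRing

namespace Matrix

section Involution

variable {R : Type*} [CommRing R]

theorem trace_eq_zero_of_mul_self_eq_one {M : Matrix (Fin 2) (Fin 2) R} (hM : M * M = 1)
    (hdet : M.det = -1) : M.trace = 0 := by
  have h00 := congrFun (congrFun hM 0) 0
  have h01 := congrFun (congrFun hM 0) 1
  simp only [mul_apply, Fin.sum_univ_two, one_apply_eq, one_apply_ne zero_ne_one] at h00 h01
  rw [det_fin_two] at hdet
  rw [trace_fin_two]
  linear_combination -M 1 1 * h00 + M 0 0 * hdet + M 1 0 * h01

theorem exists_mul_eq_mul_diag_of_trace_eq_zero [IsLocalRing R] (h2 : IsUnit (2 : R))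
    {M : Matrix (Fin 2) (Fin 2) R} (htr : M.trace = 0) (hdet : M.det = -1) :
    ∃ Q : GL (Fin 2) R,
      M * (Q : Matrix (Fin 2) (Fin 2) R) = (Q : Matrix (Fin 2) (Fin 2) R) * !![1, 0; 0, -1] := by
  obtain ⟨a, b, c, d, rfl⟩ : ∃ a b c d : R, M = !![a, b; c, d] := ⟨_, _, _, _, eta_fin_two M⟩
  rw [trace_fin_two_of] at htr
  rw [det_fin_two_of] at hdet
  obtain rfl : d = -a := by linear_combination htr
  -- the columns of `Q` are a `1`-eigenvector and a `-1`-eigenvector of `M`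
  rcases isUnit_or_isUnit_of_isUnit_add ((by ring : (1 + a) + (1 - a) = 2) ▸ h2) with h | h
  · have hQ : IsUnit !![1 + a, -b; c, 1 + a] := by
      rw [isUnit_iff_isUnit_det, det_fin_two_of,
        show (1 + a) * (1 + a) - -b * c = 2 * (1 + a) by linear_combination -hdet]
      exact h2.mul h
    refine ⟨hQ.unit, ?_⟩
    rw [hQ.unit_spec, mul_fin_two, mul_fin_two]
    ext i j
    fin_cases i <;> fin_cases j <;>
      simp only [Fin.zero_eta, Fin.mk_one, of_apply, cons_val', cons_val_zero, cons_val_one,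
        cons_val_fin_one] <;> grind
  · have hQ : IsUnit !![b, 1 - a; 1 - a, -c] := by
      rw [isUnit_iff_isUnit_det, det_fin_two_of,
        show b * -c - (1 - a) * (1 - a) = -2 * (1 - a) by linear_combination hdet]
      exact h2.neg.mul h
    refine ⟨hQ.unit, ?_⟩
    rw [hQ.unit_spec, mul_fin_two, mul_fin_two]
    ext i j
    fin_cases i <;> fin_cases j <;>
      simp only [Fin.zero_eta, Fin.mk_one, of_apply, cons_val', cons_val_zero, cons_val_one,
        cons_val_fin_one] <;> grind

theorem exists_conj_eq_diag_of_sq_eq_one [IsLocalRing R] (h2 : IsUnit (2 : R))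
    {M : GL (Fin 2) R} (hM : M ^ 2 = 1) (hdet : (M : Matrix (Fin 2) (Fin 2) R).det = -1) :
    ∃ Q : GL (Fin 2) R, ((Q⁻¹ * M * Q : GL (Fin 2) R) : Matrix (Fin 2) (Fin 2) R) =
      !![1, 0; 0, -1] := by
  have hM' : (M : Matrix (Fin 2) (Fin 2) R) * M = 1 := by
    rw [← Units.val_mul, ← sq, hM, Units.val_one]
  obtain ⟨Q, hQ⟩ :=
    exists_mul_eq_mul_diag_of_trace_eq_zero h2 (trace_eq_zero_of_mul_self_eq_one hM' hdet) hdet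
  refine ⟨Q, ?_⟩
  rw [Units.val_mul, Units.val_mul, Matrix.mul_assoc, hQ, ← Matrix.mul_assoc, Units.inv_mul,
    Matrix.one_mul]

end Involution

section DiagonalInvolution

variable {G R : Type*} [Monoid G] [CommRing R] {c : G} {σ σ' : G →* Matrix (Fin 2) (Fin 2) R}

theorem two_mul_apply_zero_zero (hσ : σ c = !![1, 0; 0, -1]) (g : G) :
    2 * σ g 0 0 = (σ g).trace + (σ (g * c)).trace := by
  rw [map_mul, hσ, trace_fin_two, trace_fin_two]
  simp only [mul_apply, Fin.sum_univ_two, of_apply, cons_val', cons_val_zero, cons_val_one,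
    cons_val_fin_one]
  ring

theorem two_mul_apply_one_one (hσ : σ c = !![1, 0; 0, -1]) (g : G) :
    2 * σ g 1 1 = (σ g).trace - (σ (g * c)).trace := by
  rw [map_mul, hσ, trace_fin_two, trace_fin_two]
  simp only [mul_apply, Fin.sum_univ_two, of_apply, cons_val', cons_val_zero, cons_val_one,
    cons_val_fin_one]
  ring

theorem apply_zero_one_mul_apply_one_zero (g h : G) :
    σ g 0 1 * σ h 1 0 = σ (g * h) 0 0 - σ g 0 0 * σ h 0 0 := by
  simp [mul_apply, Fin.sum_univ_two]

theorem apply_zero_zero_eq_of_trace_eq (h2 : IsUnit (2 : R)) (hσ : σ c = !![1, 0; 0, -1])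
    (hσ' : σ' c = !![1, 0; 0, -1]) (htr : ∀ g, (σ g).trace = (σ' g).trace) (g : G) :
    σ' g 0 0 = σ g 0 0 :=
  h2.mul_left_cancel <| by
    rw [two_mul_apply_zero_zero hσ', two_mul_apply_zero_zero hσ, htr, htr]

theorem apply_one_one_eq_of_trace_eq (h2 : IsUnit (2 : R)) (hσ : σ c = !![1, 0; 0, -1])
    (hσ' : σ' c = !![1, 0; 0, -1]) (htr : ∀ g, (σ g).trace = (σ' g).trace) (g : G) :
    σ' g 1 1 = σ g 1 1 :=
  h2.mul_left_cancel <| by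
    rw [two_mul_apply_one_one hσ', two_mul_apply_one_one hσ, htr, htr]

theorem apply_zero_one_mul_apply_one_zero_eq_of_trace_eq (h2 : IsUnit (2 : R))
    (hσ : σ c = !![1, 0; 0, -1]) (hσ' : σ' c = !![1, 0; 0, -1])
    (htr : ∀ g, (σ g).trace = (σ' g).trace) (g h : G) :
    σ' g 0 1 * σ' h 1 0 = σ g 0 1 * σ h 1 0 := by
  simp only [apply_zero_one_mul_apply_one_zero, apply_zero_zero_eq_of_trace_eq h2 hσ hσ' htr]

end DiagonalInvolution

theorem exists_conj_eq_of_diag_eq_of_offDiag_mul_eq {ι R : Type*} [CommRing R]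
    {A A' : ι → Matrix (Fin 2) (Fin 2) R} (h00 : ∀ g, A' g 0 0 = A g 0 0)
    (h11 : ∀ g, A' g 1 1 = A g 1 1) (hoff : ∀ g h, A' g 0 1 * A' h 1 0 = A g 0 1 * A h 1 0)
    {g₀ h₀ : ι} (hb : IsUnit (A g₀ 0 1)) (hc : IsUnit (A h₀ 1 0)) :
    ∃ P : GL (Fin 2) R, ∀ g,
      A' g = P * A g * ((P⁻¹ : GL (Fin 2) R) : Matrix (Fin 2) (Fin 2) R) := by
  have hbc' : IsUnit (A' g₀ 0 1 * A' h₀ 1 0) := hoff g₀ h₀ ▸ hb.mul hc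
  obtain ⟨s, hs⟩ : ∃ s : Rˣ, A' g₀ 0 1 = s * A g₀ 0 1 :=
    ⟨(isUnit_of_mul_isUnit_left hbc').unit * hb.unit⁻¹, by
      rw [Units.val_mul, mul_assoc, IsUnit.val_inv_mul, mul_one, IsUnit.unit_spec]⟩
  have hC : ∀ g, s * A' g 1 0 = A g 1 0 := fun g =>
    hb.mul_left_cancel <| by linear_combination hoff g₀ g - A' g 1 0 * hs
  have hB : ∀ g, A' g 0 1 = s * A g 0 1 := fun g =>
    (isUnit_of_mul_isUnit_right hbc').mul_right_cancel <| by
      linear_combination hoff g h₀ - A g 0 1 * hC h₀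
  refine ⟨⟨!![(s : R), 0; 0, 1], !![((s⁻¹ : Rˣ) : R), 0; 0, 1], ?_, ?_⟩, fun g => ?_⟩
  · simp [one_fin_two]
  · simp [one_fin_two]
  · simp only [Units.inv_mk]
    rw [eta_fin_two (A g), eta_fin_two (A' g), mul_fin_two, mul_fin_two]
    ext i j
    fin_cases i <;> fin_cases j <;>
      simp only [Fin.zero_eta, Fin.mk_one, of_apply, cons_val', cons_val_zero, cons_val_one,
        cons_val_fin_one]
    · linear_combination h00 g - A g 0 0 * s.mul_inv
    · linear_combination hB g
    · linear_combination ((s⁻¹ : Rˣ) : R) * hC g - A' g 1 0 * s.mul_inv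
    · linear_combination h11 g

section Irreducible

def IsIrreducibleFamily {ι K n : Type*} [Fintype n] [CommRing K] (N : ι → Matrix n n K) : Prop :=
  ∀ W : Submodule K (n → K), (∀ i, ∀ x ∈ W, N i *ᵥ x ∈ W) → W = ⊥ ∨ W = ⊤

variable {ι K : Type*} [CommRing K]

theorem IsIrreducibleFamily.conj {n : Type*} [Fintype n] [DecidableEq n]
    {N : ι → Matrix n n K} (hN : IsIrreducibleFamily N) (Q : GL n K) :
    IsIrreducibleFamily fun i => ((Q⁻¹ : GL n K) : Matrix n n K) * N i * (Q : Matrix n n K) := by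
  intro W hW
  let e : (n → K) ≃ₗ[K] (n → K) :=
    LinearMap.GeneralLinearGroup.generalLinearEquiv _ _ (GeneralLinearGroup.toLin Q)
  refine (hN (W.map (e : (n → K) →ₗ[K] (n → K))) ?_).imp
    (Submodule.map_eq_bot_iff (e := e)).mp (Submodule.map_eq_top_iff (e := e)).mp
  rintro i _ ⟨x, hx, rfl⟩
  refine ⟨_, hW i x hx, ?_⟩
  change (Q : Matrix n n K) *ᵥ _ = N i *ᵥ ((Q : Matrix n n K) *ᵥ x)
  simp only [mulVec_mulVec, ← Matrix.mul_assoc, Units.mul_inv, Matrix.one_mul]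

theorem IsIrreducibleFamily.exists_apply_ne_zero [Nontrivial K]
    {N : ι → Matrix (Fin 2) (Fin 2) K} (hN : IsIrreducibleFamily N) {i j : Fin 2} (hij : i ≠ j) :
    ∃ g, N g i j ≠ 0 := by
  by_contra! h
  have hcol : ∀ g, N g *ᵥ Pi.single j 1 = N g j j • Pi.single j 1 := by
    intro g
    ext k
    rw [mulVec_single_one]
    by_cases hk : k = j
    · simp [hk]
    · obtain rfl : k = i := by omega
      simp [hk, h g]
  have hstab : ∀ g, ∀ x ∈ K ∙ Pi.single j 1, N g *ᵥ x ∈ K ∙ Pi.single j 1 := by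
    intro g x hx
    obtain ⟨t, rfl⟩ := Submodule.mem_span_singleton.mp hx
    rw [mulVec_smul, hcol, smul_smul]
    exact Submodule.smul_mem _ _ (Submodule.mem_span_singleton_self _)
  rcases hN _ hstab with hbot | htop
  · simp at hbot
  · obtain ⟨t, ht⟩ :=
      Submodule.mem_span_singleton.mp (htop ▸ Submodule.mem_top (x := Pi.single i 1))
    simpa [hij] using congrFun ht i

end Irreducible

theorem exists_isUnit_conj_apply {R G : Type*} [CommRing R] [IsLocalRing R]
    (ρ : G → GL (Fin 2) R)
    (hρ : IsIrreducibleFamily fun g =>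
      (GeneralLinearGroup.map (residue R) (ρ g) : Matrix (Fin 2) (Fin 2) (ResidueField R)))
    (Q : GL (Fin 2) R) {i j : Fin 2} (hij : i ≠ j) :
    ∃ g, IsUnit (((Q⁻¹ * ρ g * Q : GL (Fin 2) R) : Matrix (Fin 2) (Fin 2) R) i j) := by
  obtain ⟨g, hg⟩ := (hρ.conj (GeneralLinearGroup.map (residue R) Q)).exists_apply_ne_zero hij
  refine ⟨g, (residue_ne_zero_iff_isUnit _).mp ?_⟩
  convert hg
  rw [← map_inv, ← Units.val_mul, ← Units.val_mul, ← map_mul, ← map_mul]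
  rfl

end Matrix

open Matrix

theorem conjugate_of_trace_eq_general
    (G : Type) [Group G] (c : G) (hc : c ^ 2 = 1)
    (R : Type) [CommRing R] [IsLocalRing R] (h2 : IsUnit (2 : R))
    (ρ ρ' : G →* Matrix.GeneralLinearGroup (Fin 2) R)
    -- the residual representations are irreducible
    (hres : ∀ W : Submodule (ResidueField R) (Fin 2 → ResidueField R),
      (∀ g : G, ∀ x ∈ W,
        ((Units.map ((residue R).mapMatrix.toMonoidHom) (ρ g) :
          Matrix (Fin 2) (Fin 2) (ResidueField R))).mulVec x ∈ W) →
      W = ⊥ ∨ W = ⊤)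
    -- `det ρ(c) = det ρ'(c) = −1`
    (hdet : (ρ c : Matrix (Fin 2) (Fin 2) R).det = -1)
    (hdet' : (ρ' c : Matrix (Fin 2) (Fin 2) R).det = -1)
    -- the traces agree
    (htr : ∀ g : G, (ρ g : Matrix (Fin 2) (Fin 2) R).trace =
      (ρ' g : Matrix (Fin 2) (Fin 2) R).trace) :
    ∃ P : Matrix.GeneralLinearGroup (Fin 2) R, ∀ g : G, ρ' g = P * ρ g * P⁻¹ := by
  obtain ⟨Q, hQ⟩ := exists_conj_eq_diag_of_sq_eq_one h2 (by rw [← map_pow, hc, map_one]) hdet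
  obtain ⟨Q', hQ'⟩ := exists_conj_eq_diag_of_sq_eq_one h2 (by rw [← map_pow, hc, map_one]) hdet'
  let σ := (Units.coeHom _).comp ((MulAut.conj Q⁻¹).toMonoidHom.comp ρ)
  let σ' := (Units.coeHom _).comp ((MulAut.conj Q'⁻¹).toMonoidHom.comp ρ')
  have hσ_apply : ∀ g, σ g = ↑(Q⁻¹ * ρ g * Q) := fun g => rfl
  have hσ'_apply : ∀ g, σ' g = ↑(Q'⁻¹ * ρ' g * Q') := fun g => rfl
  have htrσ : ∀ g, (σ g).trace = (σ' g).trace := fun g => by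
    rw [hσ_apply, hσ'_apply, Units.val_mul, Units.val_mul, Units.val_mul, Units.val_mul,
      trace_units_conj', trace_units_conj', htr]
  obtain ⟨g₀, hg₀⟩ := exists_isUnit_conj_apply ρ hres Q zero_ne_one
  obtain ⟨h₀, hh₀⟩ := exists_isUnit_conj_apply ρ hres Q one_ne_zero
  obtain ⟨P, hP⟩ := exists_conj_eq_of_diag_eq_of_offDiag_mul_eq
    (apply_zero_zero_eq_of_trace_eq h2 hQ hQ' htrσ) (apply_one_one_eq_of_trace_eq h2 hQ hQ' htrσ)
    (apply_zero_one_mul_apply_one_zero_eq_of_trace_eq h2 hQ hQ' htrσ) hg₀ hh₀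
  refine ⟨Q' * P * Q⁻¹, fun g => ?_⟩
  have hconj : Q'⁻¹ * ρ' g * Q' = P * (Q⁻¹ * ρ g * Q) * P⁻¹ := by
    have h := hP g
    rw [hσ_apply, hσ'_apply] at h
    ext1
    simpa only [Units.val_mul] using h
  calc ρ' g = Q' * (Q'⁻¹ * ρ' g * Q') * Q'⁻¹ := by group
    _ = Q' * P * Q⁻¹ * ρ g * (Q' * P * Q⁻¹)⁻¹ := by rw [hconj]; group

/-- Let `G` be a group with `c² = 1`, `R` a commutative local ring in
which `2` is invertible, and `ρ, ρ' : G → GL₂(R)` with irreducible residual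
representations and `det ρ(c) = det ρ'(c) = −1`.  If `ρ` and `ρ'` have the same traces,
they are conjugate by an element of `GL₂(R)`. -/
theorem conjugate_of_trace_eq
    (G : Type) [Group G] (c : G) (hc : c ^ 2 = 1)
    (R : Type) [CommRing R] [IsLocalRing R] (h2 : IsUnit (2 : R))
    (ρ ρ' : G →* Matrix.GeneralLinearGroup (Fin 2) R)
    -- the residual representations are irreducible
    (hres : ∀ W : Submodule (ResidueField R) (Fin 2 → ResidueField R),
      (∀ g : G, ∀ x ∈ W,
        ((Units.map ((residue R).mapMatrix.toMonoidHom) (ρ g) :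
          Matrix (Fin 2) (Fin 2) (ResidueField R))).mulVec x ∈ W) →
      W = ⊥ ∨ W = ⊤)
    (hres' : ∀ W : Submodule (ResidueField R) (Fin 2 → ResidueField R),
      (∀ g : G, ∀ x ∈ W,
        ((Units.map ((residue R).mapMatrix.toMonoidHom) (ρ' g) :
          Matrix (Fin 2) (Fin 2) (ResidueField R))).mulVec x ∈ W) →
      W = ⊥ ∨ W = ⊤)
    -- `det ρ(c) = det ρ'(c) = −1`
    (hdet : (ρ c : Matrix (Fin 2) (Fin 2) R).det = -1)
    (hdet' : (ρ' c : Matrix (Fin 2) (Fin 2) R).det = -1)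
    -- the traces agree
    (htr : ∀ g : G, (ρ g : Matrix (Fin 2) (Fin 2) R).trace =
      (ρ' g : Matrix (Fin 2) (Fin 2) R).trace) :
    ∃ P : Matrix.GeneralLinearGroup (Fin 2) R, ∀ g : G, ρ' g = P * ρ g * P⁻¹ :=
  conjugate_of_trace_eq_general G c hc R h2 ρ ρ' hres hdet hdet' htr
end
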